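/- arXiv:2301.05055 — 7 statements merged into one kernel-verified Lean document; each statement's English description precedes it below -/
import Mathlib

section
/- For 0 < β < 1, there exists for every β̂ with β < β̂ < 1 a constant C > 0 such that for all natural numbers n ≥ 1, 1/(n! |Γ(1-β-βn)|) ≤ C · n^{-(1-β̂)n}. -/
set_option maxHeartbeats 1000000

open Real

/-- For `0 < β < β̂ < 1` there is `C > 0` with
`1/(n! |Γ(1-β-βn)|) ≤ C n^{-(1-β̂)n}` for all `n ≥ 1`. -/
theorem mWright_coeff_bound (β : ℝ) (hβ0 : 0 < β) (hβ1 : β < 1)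
    (βh : ℝ) (hb : β < βh) (hb1 : βh < 1) :
    ∃ C > 0, ∀ n : ℕ, 1 ≤ n →
      1 / ((n.factorial : ℝ) * |Real.Gamma (1 - β - β * n)|) ≤
        C * (n : ℝ) ^ (-(1 - βh) * (n : ℝ)) := by
  obtain ⟨β', hβ'def⟩ : ∃ t : ℝ, t = (β + βh) / 2 := ⟨_, rfl⟩
  have hββ' : β < β' := by rw [hβ'def]; linarith
  have hβ'h : β' < βh := by rw [hβ'def]; linarith
  have hβ'0 : 0 < β' := lt_trans hβ0 hββ'
  have hβ'1 : β' < 1 := lt_trans hβ'h hb1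
  obtain ⟨N, hN⟩ := exists_nat_ge
    (max (max (2 / β) (2 / (β' - β))) (max (Real.exp (1 / (βh - β'))) 1))
  have key : ∀ n : ℕ, N ≤ n →
      1 / ((n.factorial : ℝ) * |Real.Gamma (1 - β - β * n)|) ≤
        (n : ℝ) ^ (-(1 - βh) * (n : ℝ)) := by
    intro n hn
    have hn' : (N : ℝ) ≤ (n : ℝ) := Nat.cast_le.mpr hn
    have hR := hN.trans hn'
    have h1 : 2 / β ≤ (n : ℝ) := le_trans (le_trans (le_max_left _ _) (le_max_left _ _)) hR
    have h2 : 2 / (β' - β) ≤ (n : ℝ) :=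
      le_trans (le_trans (le_max_right _ _) (le_max_left _ _)) hR
    have h3 : Real.exp (1 / (βh - β')) ≤ (n : ℝ) :=
      le_trans (le_trans (le_max_left _ _) (le_max_right _ _)) hR
    have h4 : (1 : ℝ) ≤ (n : ℝ) :=
      le_trans (le_trans (le_max_right _ _) (le_max_right _ _)) hR
    have hn0 : (0 : ℝ) < n := lt_of_lt_of_le one_pos h4
    have hβn : 2 ≤ β * n := by
      have := (div_le_iff₀ hβ0).mp h1
      linarith
    have hβ'n : 2 ≤ β' * n := by nlinarith
    obtain ⟨x, hxdef⟩ : ∃ t : ℝ, t = β + β * n := ⟨_, rfl⟩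
    have hx1 : 1 - β - β * (n : ℝ) = 1 - x := by rw [hxdef]; ring
    rw [hx1]
    have hx2 : 2 ≤ x := by rw [hxdef]; linarith
    have hxpos : 0 < x := by linarith
    have hΓx : 0 < Real.Gamma x := Real.Gamma_pos_of_pos hxpos
    have hgnn : 0 ≤ (n : ℝ) ^ (-(1 - βh) * (n : ℝ)) := Real.rpow_nonneg hn0.le _
    rcases eq_or_ne (Real.Gamma (1 - x)) 0 with h0 | h0
    · rw [h0, abs_zero, mul_zero, div_zero]
      exact hgnn
    -- Step 1 : 1 ≤ |Γ(1-x)| * Γ x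
    have hrefl := Real.Gamma_mul_Gamma_one_sub x
    have hprod : 1 ≤ |Real.Gamma (1 - x)| * Real.Gamma x := by
      have hsin : Real.sin (π * x) ≠ 0 := by
        intro hs
        rw [hs, div_zero, mul_eq_zero] at hrefl
        rcases hrefl with h | h
        · exact hΓx.ne' h
        · exact h0 h
      have habs : |Real.Gamma x * Real.Gamma (1 - x)| = π / |Real.sin (π * x)| := by
        rw [hrefl, abs_div, abs_of_pos Real.pi_pos]
      have hsin1 : |Real.sin (π * x)| ≤ 1 := abs_sin_le_one _
      have hsinpos : 0 < |Real.sin (π * x)| := abs_pos.mpr hsin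
      have hππ : π ≤ π / |Real.sin (π * x)| := by
        rw [le_div_iff₀ hsinpos]
        nlinarith [Real.pi_pos]
      have hπ1 : (1 : ℝ) ≤ π := by linarith [Real.pi_gt_three]
      calc (1 : ℝ) ≤ π / |Real.sin (π * x)| := le_trans hπ1 hππ
        _ = |Real.Gamma x * Real.Gamma (1 - x)| := habs.symm
        _ = |Real.Gamma (1 - x)| * Real.Gamma x := by
            rw [abs_mul, abs_of_pos hΓx, mul_comm]
    -- Step 2 : Γ x ≤ (n:ℝ) ^ (β' * n)
    have hxm : x ≤ (⌈x⌉₊ : ℝ) := Nat.le_ceil x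
    have hm2 : (2 : ℝ) ≤ (⌈x⌉₊ : ℝ) := le_trans hx2 hxm
    have hmle : (⌈x⌉₊ : ℝ) ≤ β' * n := by
      have hceil : (⌈x⌉₊ : ℝ) < x + 1 := Nat.ceil_lt_add_one hxpos.le
      have h2' := (div_le_iff₀ (by linarith : (0:ℝ) < β' - β)).mp h2
      have hxb : x + 1 ≤ β' * n := by rw [hxdef]; nlinarith
      linarith
    have hΓxm : Real.Gamma x ≤ (n : ℝ) ^ (β' * (n : ℝ)) := by
      have hmono : Real.Gamma x ≤ Real.Gamma ((⌈x⌉₊ : ℝ)) :=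
        Real.Gamma_strictMonoOn_Ici.monotoneOn (Set.mem_Ici.mpr hx2)
          (Set.mem_Ici.mpr hm2) hxm
      have hm1 : 1 ≤ ⌈x⌉₊ := by exact_mod_cast le_trans (by norm_num : (1:ℝ) ≤ 2) hm2
      obtain ⟨k, hk⟩ : ∃ k, ⌈x⌉₊ = k + 1 := ⟨⌈x⌉₊ - 1, (Nat.succ_pred_eq_of_pos hm1).symm⟩
      rw [hk] at hmono hm2 hmle
      have hΓm : Real.Gamma ((k + 1 : ℕ) : ℝ) = (Nat.factorial k : ℝ) := by
        rw [Nat.cast_add, Nat.cast_one]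
        exact Real.Gamma_nat_eq_factorial k
      have hfac : (Nat.factorial k : ℝ) ≤ ((k + 1 : ℕ) : ℝ) ^ (k + 1 : ℕ) := by
        exact_mod_cast le_trans (Nat.factorial_le (Nat.le_succ k))
          (Nat.factorial_le_pow (k + 1))
      have hpow : ((k + 1 : ℕ) : ℝ) ^ (k + 1 : ℕ) = ((k + 1 : ℕ) : ℝ) ^ (((k+1:ℕ) : ℝ)) := by
        rw [Real.rpow_natCast]
      have hchain : ((k + 1 : ℕ) : ℝ) ^ (((k+1:ℕ) : ℝ)) ≤ (n : ℝ) ^ (β' * (n : ℝ)) := by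
        calc ((k + 1 : ℕ) : ℝ) ^ (((k+1:ℕ) : ℝ))
            ≤ ((k + 1 : ℕ) : ℝ) ^ (β' * (n : ℝ)) :=
              Real.rpow_le_rpow_of_exponent_le (by linarith) hmle
          _ ≤ (β' * n) ^ (β' * (n : ℝ)) :=
              Real.rpow_le_rpow (by linarith) hmle (by linarith)
          _ ≤ (n : ℝ) ^ (β' * (n : ℝ)) :=
              Real.rpow_le_rpow (by linarith) (by nlinarith) (by linarith)
      calc Real.Gamma x ≤ Real.Gamma ((k + 1 : ℕ) : ℝ) := hmono
        _ = (Nat.factorial k : ℝ) := hΓm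
        _ ≤ ((k + 1 : ℕ) : ℝ) ^ (k + 1 : ℕ) := hfac
        _ = ((k + 1 : ℕ) : ℝ) ^ (((k+1:ℕ) : ℝ)) := hpow
        _ ≤ (n : ℝ) ^ (β' * (n : ℝ)) := hchain
    -- Step 3 : n^n ≤ exp n * n!
    have hfactpos : (0 : ℝ) < (Nat.factorial n : ℝ) := by
      exact_mod_cast Nat.factorial_pos n
    have hstir : (n : ℝ) ^ (n : ℕ) ≤ Real.exp n * (Nat.factorial n : ℝ) := by
      have h := Real.pow_div_factorial_le_exp (x := (n : ℝ)) hn0.le n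
      rw [div_le_iff₀ hfactpos] at h
      linarith
    -- Step 4 : exp n ≤ n ^ ((βh - β') * n)
    have hexp : Real.exp (n : ℝ) ≤ (n : ℝ) ^ ((βh - β') * (n : ℝ)) := by
      have hc : (0 : ℝ) < βh - β' := by linarith
      have he1 : Real.exp 1 ≤ (n : ℝ) ^ (βh - β') := by
        have h := Real.rpow_le_rpow (Real.exp_nonneg _) h3 hc.le
        rwa [← Real.exp_one_rpow (1 / (βh - β')), ← Real.rpow_mul (Real.exp_nonneg 1),
          one_div_mul_cancel hc.ne', Real.rpow_one] at h
      calc Real.exp (n : ℝ) = Real.exp 1 ^ (n : ℝ) := (Real.exp_one_rpow _).symm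
        _ ≤ ((n : ℝ) ^ (βh - β')) ^ (n : ℝ) :=
            Real.rpow_le_rpow (Real.exp_nonneg 1) he1 hn0.le
        _ = (n : ℝ) ^ ((βh - β') * (n : ℝ)) := by
            rw [← Real.rpow_mul hn0.le]
    -- Combine
    have hden : 0 < (Nat.factorial n : ℝ) * |Real.Gamma (1 - x)| :=
      mul_pos hfactpos (abs_pos.mpr h0)
    have step1 : 1 / ((Nat.factorial n : ℝ) * |Real.Gamma (1 - x)|) ≤
        Real.Gamma x / (Nat.factorial n : ℝ) := by
      rw [div_le_div_iff₀ hden hfactpos]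
      have h := mul_le_mul_of_nonneg_left hprod hfactpos.le
      nlinarith
    have hA : (0 : ℝ) ≤ (n : ℝ) ^ (β' * (n : ℝ)) := Real.rpow_nonneg hn0.le _
    have hnn : (0 : ℝ) < (n : ℝ) ^ (n : ℕ) := pow_pos hn0 n
    have step2 : Real.Gamma x / (Nat.factorial n : ℝ) ≤
        (n : ℝ) ^ (β' * (n : ℝ)) * Real.exp n / (n : ℝ) ^ (n : ℕ) := by
      rw [div_le_div_iff₀ hfactpos hnn]
      calc Real.Gamma x * (n : ℝ) ^ (n : ℕ)
          ≤ (n : ℝ) ^ (β' * (n : ℝ)) * (Real.exp n * (Nat.factorial n : ℝ)) :=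
            mul_le_mul hΓxm hstir (by positivity) hA
        _ = (n : ℝ) ^ (β' * (n : ℝ)) * Real.exp n * (Nat.factorial n : ℝ) := by ring
    have step3 : (n : ℝ) ^ (β' * (n : ℝ)) * Real.exp n / (n : ℝ) ^ (n : ℕ) ≤
        (n : ℝ) ^ (-(1 - βh) * (n : ℝ)) := by
      have hle : (n : ℝ) ^ (β' * (n : ℝ)) * Real.exp n ≤
          (n : ℝ) ^ (β' * (n : ℝ)) * (n : ℝ) ^ ((βh - β') * (n : ℝ)) :=
        mul_le_mul_of_nonneg_left hexp hA
      have heq : (n : ℝ) ^ (β' * (n : ℝ)) * (n : ℝ) ^ ((βh - β') * (n : ℝ)) /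
          (n : ℝ) ^ (n : ℕ) = (n : ℝ) ^ (-(1 - βh) * (n : ℝ)) := by
        rw [← Real.rpow_natCast (n : ℝ) n, ← Real.rpow_add hn0, ← Real.rpow_sub hn0]
        ring_nf
      rw [← heq]
      gcongr
    exact le_trans step1 (le_trans step2 step3)
  -- Assemble the constant
  have hfnn : ∀ k : ℕ, 0 ≤ 1 / ((k.factorial : ℝ) * |Real.Gamma (1 - β - β * k)|) :=
    fun k => div_nonneg one_pos.le (mul_nonneg (Nat.cast_nonneg _) (abs_nonneg _))
  have hterm : ∀ k : ℕ, 0 ≤ 1 / ((k.factorial : ℝ) * |Real.Gamma (1 - β - β * k)|) /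
      (k : ℝ) ^ (-(1 - βh) * (k : ℝ)) :=
    fun k => div_nonneg (hfnn k) (Real.rpow_nonneg (Nat.cast_nonneg k) _)
  have hs : 0 ≤ ∑ k ∈ Finset.range N, 1 / ((k.factorial : ℝ) * |Real.Gamma (1 - β - β * k)|) /
      (k : ℝ) ^ (-(1 - βh) * (k : ℝ)) :=
    Finset.sum_nonneg fun k _ => hterm k
  refine ⟨1 + ∑ k ∈ Finset.range N, 1 / ((k.factorial : ℝ) * |Real.Gamma (1 - β - β * k)|) /
      (k : ℝ) ^ (-(1 - βh) * (k : ℝ)), by linarith, ?_⟩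
  intro n hn1
  have hgpos : 0 < (n : ℝ) ^ (-(1 - βh) * (n : ℝ)) :=
    Real.rpow_pos_of_pos (by exact_mod_cast Nat.pos_of_ne_zero (by omega)) _
  rcases le_or_gt N n with h | h
  · calc 1 / ((n.factorial : ℝ) * |Real.Gamma (1 - β - β * n)|)
        ≤ (n : ℝ) ^ (-(1 - βh) * (n : ℝ)) := key n h
      _ ≤ (1 + ∑ k ∈ Finset.range N, 1 / ((k.factorial : ℝ) * |Real.Gamma (1 - β - β * k)|) /
          (k : ℝ) ^ (-(1 - βh) * (k : ℝ))) * (n : ℝ) ^ (-(1 - βh) * (n : ℝ)) := by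
        nlinarith
  · have hfg : 1 / ((n.factorial : ℝ) * |Real.Gamma (1 - β - β * n)|) /
        (n : ℝ) ^ (-(1 - βh) * (n : ℝ)) ≤
        ∑ k ∈ Finset.range N, 1 / ((k.factorial : ℝ) * |Real.Gamma (1 - β - β * k)|) /
          (k : ℝ) ^ (-(1 - βh) * (k : ℝ)) :=
      Finset.single_le_sum (fun k _ => hterm k) (Finset.mem_range.mpr h)
    rw [div_le_iff₀ hgpos] at hfg
    calc 1 / ((n.factorial : ℝ) * |Real.Gamma (1 - β - β * n)|)
        ≤ (∑ k ∈ Finset.range N, 1 / ((k.factorial : ℝ) * |Real.Gamma (1 - β - β * k)|) /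
          (k : ℝ) ^ (-(1 - βh) * (k : ℝ))) * (n : ℝ) ^ (-(1 - βh) * (n : ℝ)) := hfg
      _ ≤ (1 + ∑ k ∈ Finset.range N, 1 / ((k.factorial : ℝ) * |Real.Gamma (1 - β - β * k)|) /
          (k : ℝ) ^ (-(1 - βh) * (k : ℝ))) * (n : ℝ) ^ (-(1 - βh) * (n : ℝ)) := by
        nlinarith
end

section
/- Let θ > 0 and let X be a nonnegative random variable whose cdf F satisfies c₁·exp(-C₁·y^{-θ}) ≤ F(y) ≤ K·exp(-C₂·y^{-θ}) for 0 < y ≤ 1 (constants c₁, C₁, K, C₂ > 0). Then the negative moments η_k = E[X^{-k}] satisfy log η_k = (k/θ)·log k + o(k·log k) as k → ∞. -/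
/-!
Lower bound: `X ^ (-a) ≥ y ^ (-a)` on `{X ≤ y}`, and `y = a ^ (-1/θ)` gives
`η_a ≥ c₁ exp (-C₁ a) a ^ (a/θ)`.
Upper bound: the cdf bound gives `P(X ^ (-a) > t) ≤ K exp (-C₂ t ^ (θ/a))` for `t > 1`, and
`exp (-u) ≤ (r/u) ^ r` with `r = a/θ + 1` turns this into a tail `O(t ^ (-(1 + θ/a)))`, so the
layer-cake formula gives `η_a ≤ 1 + K ((a/θ + 1)/C₂) ^ (a/θ + 1) (a/θ)`.
Both bounds have logarithm `(a/θ) log a + O(a)`, and `O(a) = o(a log a)`.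
Since `0 ^ (-a) = 0` in Mathlib, the lower bound needs `X > 0` a.s.; the upper cdf bound forces
`P(X ≤ 0) = 0`.
-/

open MeasureTheory Real Filter Asymptotics Set Topology

lemma Real.exp_neg_le_div_rpow {u r : ℝ} (hu : 0 < u) (hr : 0 < r) :
    exp (-u) ≤ (r / u) ^ r := by
  rw [rpow_def_of_pos (div_pos hr hu), exp_le_exp, ← inv_div, log_inv]
  have hlog := log_le_sub_one_of_pos (div_pos hu hr)
  have hcancel : r * (u / r) = u := mul_div_cancel₀ u hr.ne'
  nlinarith

lemma Real.log_one_add_le_of_le_exp {B M : ℝ} (hB : 0 ≤ B) (hM : 0 ≤ M) (hBM : B ≤ exp M) :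
    log (1 + B) ≤ M + 1 := by
  rw [log_le_iff_le_exp (by positivity), exp_add]
  have h2 : 2 ≤ exp 1 := by linarith [add_one_le_exp (1 : ℝ)]
  nlinarith [one_le_exp hM]

section

variable {Ω : Type*} [MeasurableSpace Ω] {μ : Measure Ω} {X : Ω → ℝ}

lemma lintegral_le_of_meas_lt_le_rpow [IsFiniteMeasure μ] {f : Ω → ℝ} (hf : 0 ≤ᵐ[μ] f)
    (hfm : AEMeasurable f μ) {c p : ℝ} (hc : 0 ≤ c) (hp : 1 < p)
    (htail : ∀ t : ℝ, 1 < t → μ {ω | t < f ω} ≤ ENNReal.ofReal (c * t ^ (-p))) :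
    ∫⁻ ω, ENNReal.ofReal (f ω) ∂μ ≤ μ univ + ENNReal.ofReal (c / (p - 1)) := by
  rw [lintegral_eq_lintegral_meas_lt μ hf hfm, ← Ioc_union_Ioi_eq_Ioi zero_le_one,
    lintegral_union measurableSet_Ioi (Ioc_disjoint_Ioi le_rfl)]
  gcongr
  · calc ∫⁻ t in Ioc (0 : ℝ) 1, μ {ω | t < f ω} ≤ ∫⁻ _ in Ioc (0 : ℝ) 1, μ univ :=
          lintegral_mono fun _ => measure_mono (subset_univ _)
      _ = μ univ := by simp
  · have hint : IntegrableOn (fun t : ℝ => c * t ^ (-p)) (Ioi 1) :=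
      (integrableOn_Ioi_rpow_of_lt (by linarith) one_pos).const_mul c
    calc ∫⁻ t in Ioi (1 : ℝ), μ {ω | t < f ω}
        ≤ ∫⁻ t in Ioi (1 : ℝ), ENNReal.ofReal (c * t ^ (-p)) :=
          setLIntegral_mono' measurableSet_Ioi htail
      _ = ENNReal.ofReal (∫ t in Ioi (1 : ℝ), c * t ^ (-p)) := by
          refine (ofReal_integral_eq_lintegral_ofReal hint ?_).symm
          filter_upwards [ae_restrict_mem measurableSet_Ioi] with t (ht : 1 < t)
          positivity
      _ = ENNReal.ofReal (c / (p - 1)) := by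
          rw [integral_const_mul, integral_Ioi_rpow_of_lt (by linarith) one_pos, one_rpow,
            show -p + 1 = -(p - 1) by ring, neg_div_neg_eq, mul_one_div]

lemma ae_pos_of_measureReal_le_le_exp [IsFiniteMeasure μ] {θ K C : ℝ} (hθ : 0 < θ) (hC : 0 < C)
    (hF : ∀ y : ℝ, 0 < y → y ≤ 1 → μ.real {ω | X ω ≤ y} ≤ K * exp (-C * y ^ (-θ))) :
    ∀ᵐ ω ∂μ, 0 < X ω := by
  have hlim : Tendsto (fun y : ℝ => K * exp (-C * y ^ (-θ))) (𝓝[>] 0) (𝓝 0) := by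
    simpa using ((tendsto_exp_atBot.comp ((tendsto_rpow_neg_nhdsGT_zero
      (neg_lt_zero.2 hθ)).const_mul_atTop_of_neg (neg_lt_zero.2 hC))).const_mul K)
  have hle : ∀ᶠ y in 𝓝[>] 0, μ.real {ω | X ω ≤ 0} ≤ K * exp (-C * y ^ (-θ)) := by
    filter_upwards [Ioc_mem_nhdsGT zero_lt_one] with y ⟨hy0, hy1⟩
    exact (measureReal_mono fun ω (hω : X ω ≤ 0) => hω.trans hy0.le).trans (hF y hy0 hy1)
  have hzero : μ.real {ω | X ω ≤ 0} = 0 :=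
    le_antisymm (ge_of_tendsto hlim hle) measureReal_nonneg
  rw [ae_iff]
  simpa [measureReal_eq_zero_iff] using hzero

lemma measureReal_lt_rpow_neg_le [IsFiniteMeasure μ] {θ K C a t : ℝ} (hθ : 0 < θ) (hK : 0 ≤ K)
    (hC : 0 < C) (ha : 0 < a) (ht : 1 < t)
    (hF : ∀ y : ℝ, 0 < y → y ≤ 1 → μ.real {ω | X ω ≤ y} ≤ K * exp (-C * y ^ (-θ))) :
    μ.real {ω | t < X ω ^ (-a)} ≤
      K * ((a / θ + 1) / C) ^ (a / θ + 1) * t ^ (-(1 + θ / a)) := by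
  have ht0 : 0 < t := one_pos.trans ht
  set y := t ^ (-a⁻¹)
  have hy0 : 0 < y := rpow_pos_of_pos ht0 _
  have hy1 : y ≤ 1 := rpow_le_one_of_one_le_of_nonpos ht.le (by simp [ha.le])
  have hya : y ^ (-a) = t := by
    rw [← rpow_mul ht0.le, neg_mul_neg, inv_mul_cancel₀ ha.ne', rpow_one]
  have hyθ : y ^ (-θ) = t ^ (θ / a) := by
    rw [← rpow_mul ht0.le]
    ring_nf
  have hsub : {ω | t < X ω ^ (-a)} ⊆ {ω | X ω ≤ y} := by
    intro ω (hω : t < X ω ^ (-a))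
    show X ω ≤ y
    by_contra! hlt
    have := rpow_lt_rpow_of_neg hy0 hlt (neg_lt_zero.2 ha)
    exact (hya ▸ this).not_gt hω
  have hexp : exp (-(C * t ^ (θ / a))) ≤ ((a / θ + 1) / C) ^ (a / θ + 1) * t ^ (-(1 + θ / a)) := by
    calc exp (-(C * t ^ (θ / a)))
        ≤ ((a / θ + 1) / (C * t ^ (θ / a))) ^ (a / θ + 1) :=
          exp_neg_le_div_rpow (by positivity) (by positivity)
      _ = ((a / θ + 1) / C) ^ (a / θ + 1) * t ^ (-(1 + θ / a)) := by
          rw [div_mul_eq_div_div, div_rpow (by positivity) (by positivity), ← rpow_mul ht0.le,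
            rpow_neg ht0.le, div_eq_mul_inv]
          congr 2
          field_simp
  calc μ.real {ω | t < X ω ^ (-a)} ≤ μ.real {ω | X ω ≤ y} := measureReal_mono hsub
    _ ≤ K * exp (-C * y ^ (-θ)) := hF y hy0 hy1
    _ ≤ _ := by
      rw [hyθ, neg_mul, mul_assoc]
      gcongr

lemma integrable_rpow_neg_and_integral_le [IsProbabilityMeasure μ] (hXm : Measurable X)
    {θ K C a : ℝ} (hθ : 0 < θ) (hK : 0 ≤ K) (hC : 0 < C) (ha : 0 < a)
    (hF : ∀ y : ℝ, 0 < y → y ≤ 1 → μ.real {ω | X ω ≤ y} ≤ K * exp (-C * y ^ (-θ))) :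
    Integrable (fun ω => X ω ^ (-a)) μ ∧
      ∫ ω, X ω ^ (-a) ∂μ ≤ 1 + K * ((a / θ + 1) / C) ^ (a / θ + 1) * (a / θ) := by
  set c := K * ((a / θ + 1) / C) ^ (a / θ + 1)
  have hf : 0 ≤ᵐ[μ] fun ω => X ω ^ (-a) :=
    (ae_pos_of_measureReal_le_le_exp hθ hC hF).mono fun ω hω => (rpow_pos_of_pos hω _).le
  have hfm : Measurable fun ω => X ω ^ (-a) := hXm.pow_const _
  have hL : ∫⁻ ω, ENNReal.ofReal (X ω ^ (-a)) ∂μ ≤ ENNReal.ofReal (1 + c * (a / θ)) := by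
    have := lintegral_le_of_meas_lt_le_rpow (c := c) (p := 1 + θ / a) hf hfm.aemeasurable
      (by positivity) (lt_add_of_pos_right 1 (div_pos hθ ha)) fun t ht => by
        rw [← ofReal_measureReal]
        exact ENNReal.ofReal_le_ofReal (measureReal_lt_rpow_neg_le hθ hK hC ha ht hF)
    rwa [measure_univ, add_sub_cancel_left, div_div_eq_mul_div, mul_div_assoc, ← ENNReal.ofReal_one,
      ← ENNReal.ofReal_add zero_le_one (by positivity)] at this
  refine ⟨⟨hfm.aestronglyMeasurable, (hasFiniteIntegral_iff_ofReal hf).2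
    (hL.trans_lt ENNReal.ofReal_lt_top)⟩, ?_⟩
  rw [integral_eq_lintegral_of_nonneg_ae hf hfm.aestronglyMeasurable]
  exact ENNReal.toReal_le_of_le_ofReal (by positivity) hL

lemma rpow_neg_mul_measureReal_le_integral [IsFiniteMeasure μ] (hXm : Measurable X)
    (hpos : ∀ᵐ ω ∂μ, 0 < X ω) {a : ℝ} (ha : 0 ≤ a) (y : ℝ)
    (hint : Integrable (fun ω => X ω ^ (-a)) μ) :
    y ^ (-a) * μ.real {ω | X ω ≤ y} ≤ ∫ ω, X ω ^ (-a) ∂μ := by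
  have hmeas : MeasurableSet {ω | X ω ≤ y} := hXm measurableSet_Iic
  rw [mul_comm, ← smul_eq_mul, ← integral_indicator_const _ hmeas]
  refine integral_mono_ae ((integrable_const _).indicator hmeas) hint ?_
  filter_upwards [hpos] with ω hω
  by_cases hy : X ω ≤ y
  · simpa [indicator_of_mem, hy] using rpow_le_rpow_of_nonpos hω hy (neg_nonpos.2 ha)
  · simpa [indicator_of_notMem, hy] using (rpow_pos_of_pos hω _).le

lemma mul_exp_mul_rpow_le_integral [IsFiniteMeasure μ] (hXm : Measurable X)
    (hpos : ∀ᵐ ω ∂μ, 0 < X ω) {θ c C a : ℝ} (hθ : 0 < θ) (ha : 1 ≤ a)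
    (hint : Integrable (fun ω => X ω ^ (-a)) μ)
    (hF : ∀ y : ℝ, 0 < y → y ≤ 1 → c * exp (-C * y ^ (-θ)) ≤ μ.real {ω | X ω ≤ y}) :
    c * exp (-C * a) * a ^ (a / θ) ≤ ∫ ω, X ω ^ (-a) ∂μ := by
  have ha0 : 0 < a := one_pos.trans_le ha
  set y := a ^ (-θ⁻¹)
  have hy0 : 0 < y := rpow_pos_of_pos ha0 _
  have hy1 : y ≤ 1 := rpow_le_one_of_one_le_of_nonpos ha (by simp [hθ.le])
  have hyθ : y ^ (-θ) = a := by
    rw [← rpow_mul ha0.le, neg_mul_neg, inv_mul_cancel₀ hθ.ne', rpow_one]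
  have hya : y ^ (-a) = a ^ (a / θ) := by
    rw [← rpow_mul ha0.le]
    ring_nf
  calc c * exp (-C * a) * a ^ (a / θ) = y ^ (-a) * (c * exp (-C * y ^ (-θ))) := by
        rw [hyθ, hya, mul_comm]
    _ ≤ y ^ (-a) * μ.real {ω | X ω ≤ y} := by gcongr; exact hF y hy0 hy1
    _ ≤ ∫ ω, X ω ^ (-a) ∂μ := rpow_neg_mul_measureReal_le_integral hXm hpos ha0.le y hint

end

lemma exists_forall_log_mul_rpow_le {θ K C : ℝ} (hθ : 0 < θ) (hK : 0 < K) (hC : 0 < C) :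
    ∃ A, ∀ a : ℝ, 1 ≤ a →
      log (K * ((a / θ + 1) / C) ^ (a / θ + 1) * (a / θ)) ≤ a / θ * log a + A * a := by
  set c := θ⁻¹ + 1
  have hc : 1 ≤ c := by simp [c, hθ.le]
  refine ⟨|log K| + 2 + c * log c + c * |log C| + |log θ|, fun a ha => ?_⟩
  have ha0 : 0 < a := one_pos.trans_le ha
  set s := a / θ
  have hs : 0 < s := div_pos ha0 hθ
  have hsc : s + 1 ≤ c * a := by
    simp only [s, c]; rw [div_eq_inv_mul, add_mul, one_mul]; linarith
  have hlogs : log (s + 1) ≤ log c + log a := by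
    rw [← log_mul (by positivity) ha0.ne']; exact log_le_log (by positivity) hsc
  have hloga : log a ≤ a := (log_le_sub_one_of_pos ha0).trans (by linarith)
  have hlogc : 0 ≤ log c := log_nonneg hc
  rw [log_mul (by positivity) hs.ne', log_mul hK.ne' (by positivity), log_rpow (by positivity),
    log_div (by positivity) hC.ne', log_div ha0.ne' hθ.ne']
  have h1 : (s + 1) * log (s + 1) ≤ s * log a + a + c * log c * a := by
    nlinarith [mul_le_mul_of_nonneg_left hlogs (by positivity : (0 : ℝ) ≤ s + 1),
      mul_le_mul_of_nonneg_right hsc hlogc]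
  have h2 : -((s + 1) * log C) ≤ c * |log C| * a := by
    nlinarith [neg_abs_le (log C), mul_le_mul_of_nonneg_right hsc (abs_nonneg (log C))]
  have h3 : log K ≤ |log K| * a := (le_abs_self _).trans (le_mul_of_one_le_right (abs_nonneg _) ha)
  have h4 : -log θ ≤ |log θ| * a :=
    (neg_le_abs _).trans (le_mul_of_one_le_right (abs_nonneg _) ha)
  nlinarith

lemma isLittleO_log_sub_of_bounds {η : ℝ → ℝ} {θ c₁ C₁ K C : ℝ} (hθ : 0 < θ) (hc₁ : 0 < c₁)
    (hK : 0 < K) (hC : 0 < C)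
    (hlow : ∀ a : ℝ, 1 ≤ a → c₁ * exp (-C₁ * a) * a ^ (a / θ) ≤ η a)
    (hup : ∀ a : ℝ, 1 ≤ a → η a ≤ 1 + K * ((a / θ + 1) / C) ^ (a / θ + 1) * (a / θ)) :
    (fun a => log (η a) - a / θ * log a) =o[atTop] fun a => a * log a := by
  obtain ⟨A, hA⟩ := exists_forall_log_mul_rpow_le hθ hK hC
  have hbound : ∀ a : ℝ, 1 ≤ a →
      |log (η a) - a / θ * log a| ≤ (|log c₁| + |C₁| + |A| + 1) * a := by
    intro a ha
    have ha0 : 0 < a := one_pos.trans_le ha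
    have hlow_pos : 0 < c₁ * exp (-C₁ * a) * a ^ (a / θ) := by positivity
    have hB : 0 < K * ((a / θ + 1) / C) ^ (a / θ + 1) * (a / θ) := by positivity
    have hlog_low : log c₁ - C₁ * a + a / θ * log a ≤ log (η a) := by
      have := log_le_log hlow_pos (hlow a ha)
      rw [log_mul (by positivity) (by positivity), log_mul hc₁.ne' (by positivity), log_exp,
        log_rpow ha0] at this
      linarith
    have hlog_up : log (η a) ≤ a / θ * log a + |A| * a + 1 := by
      refine (log_le_log (hlow_pos.trans_le (hlow a ha)) (hup a ha)).trans
        (log_one_add_le_of_le_exp hB.le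
          (add_nonneg (mul_nonneg (by positivity) (log_nonneg ha)) (by positivity)) ?_)
      calc _ = exp (log (K * ((a / θ + 1) / C) ^ (a / θ + 1) * (a / θ))) := (exp_log hB).symm
        _ ≤ _ := exp_le_exp.2 ((hA a ha).trans (by gcongr; exact le_abs_self A))
    rw [abs_le]
    constructor
    · nlinarith [neg_abs_le (log c₁), le_abs_self C₁, abs_nonneg (log c₁), abs_nonneg A,
        le_mul_of_one_le_right (abs_nonneg (log c₁)) ha]
    · nlinarith [abs_nonneg (log c₁), abs_nonneg C₁]
  have hO : (fun a => log (η a) - a / θ * log a) =O[atTop] fun a => a :=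
    IsBigO.of_bound _ <| (eventually_ge_atTop 1).mono fun a ha => by
      simpa [abs_of_pos (one_pos.trans_le ha)] using hbound a ha
  refine hO.trans_isLittleO ?_
  simpa using (isBigO_refl id atTop).mul_isLittleO (isLittleO_const_log_atTop (c := 1))

theorem negative_moments_asymptotics_general {Ω : Type*} [MeasurableSpace Ω]
    (μ : Measure Ω) [IsProbabilityMeasure μ]
    (X : Ω → ℝ) (hXm : Measurable X)
    (θ c₁ C₁ K C₂ : ℝ) (hθ : 0 < θ) (hc₁ : 0 < c₁)
    (hK : 0 < K) (hC₂ : 0 < C₂)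
    (hFub : ∀ y : ℝ, 0 < y → y ≤ 1 →
      (μ {ω | X ω ≤ y}).toReal ≤ K * Real.exp (-C₂ * y ^ (-θ)))
    (hFlb : ∀ y : ℝ, 0 < y → y ≤ 1 →
      c₁ * Real.exp (-C₁ * y ^ (-θ)) ≤ (μ {ω | X ω ≤ y}).toReal) :
    (fun k : ℕ =>
        Real.log (∫ ω, (X ω) ^ (-(k : ℝ)) ∂μ) - ((k : ℝ) / θ) * Real.log k)
      =o[atTop] (fun k : ℕ => (k : ℝ) * Real.log k) := by
  have hpos := ae_pos_of_measureReal_le_le_exp hθ hC₂ hFub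
  have hupper := fun a (ha : 1 ≤ a) =>
    integrable_rpow_neg_and_integral_le hXm hθ hK.le hC₂ (one_pos.trans_le ha) hFub
  have hreal : (fun a : ℝ => log (∫ ω, X ω ^ (-a) ∂μ) - a / θ * log a)
      =o[atTop] fun a => a * log a :=
    isLittleO_log_sub_of_bounds hθ hc₁ hK hC₂
      (fun a ha => mul_exp_mul_rpow_le_integral hXm hpos hθ ha (hupper a ha).1 hFlb)
      fun a ha => (hupper a ha).2
  exact hreal.comp_tendsto tendsto_natCast_atTop_atTop

/-- If the cdf of a nonnegative random variable `X` satisfies two-sided bounds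
`c₁ exp(-C₁ y^{-θ}) ≤ F(y) ≤ K exp(-C₂ y^{-θ})` for `0 < y ≤ 1`, then the negative
moments `η_k = E[X^{-k}]` satisfy `log η_k = (k/θ) log k + o(k log k)`. -/
theorem negative_moments_asymptotics {Ω : Type*} [MeasurableSpace Ω]
    (μ : Measure Ω) [IsProbabilityMeasure μ]
    (X : Ω → ℝ) (hXm : Measurable X) (hX0 : ∀ ω, 0 ≤ X ω)
    (θ c₁ C₁ K C₂ : ℝ) (hθ : 0 < θ) (hc₁ : 0 < c₁) (hC₁ : 0 < C₁)
    (hK : 0 < K) (hC₂ : 0 < C₂)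
    (hFub : ∀ y : ℝ, 0 < y → y ≤ 1 →
      (μ {ω | X ω ≤ y}).toReal ≤ K * Real.exp (-C₂ * y ^ (-θ)))
    (hFlb : ∀ y : ℝ, 0 < y → y ≤ 1 →
      c₁ * Real.exp (-C₁ * y ^ (-θ)) ≤ (μ {ω | X ω ≤ y}).toReal) :
    (fun k : ℕ =>
        Real.log (∫ ω, (X ω) ^ (-(k : ℝ)) ∂μ) - ((k : ℝ) / θ) * Real.log k)
      =o[atTop] (fun k : ℕ => (k : ℝ) * Real.log k) :=
  negative_moments_asymptotics_general μ X hXm θ c₁ C₁ K C₂ hθ hc₁ hK hC₂ hFub hFlb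
end

section
/- Generalized grey Brownian motion B_{α,β} = √(L_β)·B_{α/2}, with 0 < α < 2, 0 < β < 1, where L_β has density M_β bounded with M_β(0) = 1/Γ(1-β), and where the sup norm of fBm B_{α/2} satisfies exponential small-ball bounds, obeys P[sup_{0≤t≤1}|B_{α,β}(t)| ≤ ε] ~ ε²·E[(sup_{0≤t≤1}|B_{α/2}(t)|)^{-2}] / Γ(1-β) as ε ↓ 0. -/
open MeasureTheory ProbabilityTheory Real Filter Set Topology
open scoped ENNReal Nat

/-!
Conditioning on the fBm factor, `P[√L · S ≤ ε] = E[G((ε/S)²)]`, where `G` is the distribution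
function of `L`. By the reflection formula the coefficients of the M-Wright series are bounded by
`max (Γ β) 1`, so `M_β(x) → 1/Γ(1-β)` as `x → 0⁺` and hence `G(y)/y → 1/Γ(1-β)`, while
`G(y) ≤ C y` for the bound `C` of `M_β`. The upper small-ball bound gives `P[S ≤ ε] = O(ε³)`,
so `S > 0` a.s. and `S⁻²` is integrable, and dominated convergence with majorant `C S⁻²` applies.
-/

namespace Real

theorem inv_Gamma_one_sub_eq {s : ℝ} (hs : 0 < s) :
    (Gamma (1 - s))⁻¹ = Gamma s * sin (π * s) / π := by
  have hrefl := Gamma_mul_Gamma_one_sub s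
  have hΓs : Gamma s ≠ 0 := (Gamma_pos_of_pos hs).ne'
  by_cases h : Gamma (1 - s) = 0
  · rw [h, mul_zero, eq_comm, div_eq_zero_iff] at hrefl
    simp [h, hrefl.resolve_left pi_ne_zero]
  · have hsin : sin (π * s) ≠ 0 := by
      intro h0
      rw [h0, div_zero] at hrefl
      exact mul_ne_zero hΓs h hrefl
    rw [eq_div_iff hsin] at hrefl
    field_simp
    rw [mul_comm s π]
    linear_combination -hrefl

theorem Gamma_le_max_factorial {β s : ℝ} (hβ : 0 < β) {n : ℕ} (hs : s ∈ Icc β (n + 1)) :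
    Gamma s ≤ max (Gamma β) n ! := by
  have := convexOn_Gamma.le_max_of_mem_Icc hβ (by positivity : (0 : ℝ) < n + 1) hs
  rwa [Gamma_nat_eq_factorial] at this

end Real

theorem abs_inv_factorial_mul_Gamma_le {β : ℝ} (hβ0 : 0 < β) (hβ1 : β ≤ 1) (n : ℕ) :
    |((n ! : ℝ) * Gamma (1 - β - β * n))⁻¹| ≤ max (Gamma β) 1 := by
  have hfac : (1 : ℝ) ≤ n ! := Nat.one_le_cast.mpr n.factorial_pos
  have hs : 0 < β * (n + 1) := by positivity
  have hΓs : Gamma (β * (n + 1)) ≤ max (Gamma β) 1 * n ! := by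
    refine (Gamma_le_max_factorial hβ0 (n := n) ⟨?_, ?_⟩).trans (max_le ?_ ?_)
    · nlinarith [n.cast_nonneg (α := ℝ)]
    · nlinarith [n.cast_nonneg (α := ℝ)]
    · exact (le_max_left _ _).trans
        (le_mul_of_one_le_right (zero_le_one.trans (le_max_right _ _)) hfac)
    · exact le_mul_of_one_le_left (by positivity) (le_max_right _ _)
  rw [show 1 - β - β * n = 1 - β * (n + 1) by ring, mul_inv, inv_Gamma_one_sub_eq hs,
    abs_mul, abs_div, abs_mul, abs_inv, abs_of_pos (Gamma_pos_of_pos hs), abs_of_pos pi_pos,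
    abs_of_pos (by positivity : (0 : ℝ) < n !)]
  have hsin_div : Gamma (β * (n + 1)) * |sin (π * (β * (n + 1)))| / π ≤ Gamma (β * (n + 1)) :=
    div_le_of_le_mul₀ pi_pos.le (Gamma_pos_of_pos hs).le (mul_le_mul_of_nonneg_left
      ((abs_sin_le_one _).trans (by linarith [pi_gt_three])) (Gamma_pos_of_pos hs).le)
  rw [inv_mul_le_iff₀ (by positivity)]
  linarith


theorem abs_tsum_mul_pow_sub_coeff_zero_le {a : ℕ → ℝ} {K x : ℝ} (ha : ∀ n, |a n| ≤ K)
    (hx : |x| ≤ 1 / 2) : |∑' n, a n * x ^ n - a 0| ≤ 2 * K * |x| := by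
  have hK : 0 ≤ K := (abs_nonneg _).trans (ha 0)
  have hx1 : |x| < 1 := by linarith
  have hbound : ∀ n, ‖a (n + 1) * x ^ (n + 1)‖ ≤ K * |x| * |x| ^ n := fun n => by
    rw [norm_mul, norm_pow, Real.norm_eq_abs, Real.norm_eq_abs, pow_succ]
    calc |a (n + 1)| * (|x| ^ n * |x|) ≤ K * (|x| ^ n * |x|) := by gcongr; exact ha _
      _ = K * |x| * |x| ^ n := by ring
  have hgeo : Summable fun n => K * |x| * |x| ^ n :=
    (summable_geometric_of_lt_one (abs_nonneg x) hx1).mul_left _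
  have htail : Summable fun n => a (n + 1) * x ^ (n + 1) := hgeo.of_norm_bounded hbound
  have hsum : Summable fun n => a n * x ^ n := (summable_nat_add_iff 1).mp htail
  rw [hsum.tsum_eq_zero_add, pow_zero, mul_one, add_sub_cancel_left]
  calc |∑' n, a (n + 1) * x ^ (n + 1)| ≤ ∑' n, K * |x| * |x| ^ n :=
        tsum_of_norm_bounded hgeo.hasSum hbound
    _ = K * |x| * (1 - |x|)⁻¹ := by rw [tsum_mul_left, tsum_geometric_of_lt_one (abs_nonneg x) hx1]
    _ ≤ K * |x| * 2 := by
        gcongr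
        rw [inv_le_comm₀ (by linarith) two_pos]
        linarith
    _ = 2 * K * |x| := by ring

noncomputable def mWrightSeries (β x : ℝ) : ℝ :=
  ∑' n : ℕ, (-x) ^ n / ((n ! : ℝ) * Gamma (1 - β - β * n))

theorem tendsto_mWrightSeries_nhds_zero {β : ℝ} (hβ0 : 0 < β) (hβ1 : β ≤ 1) :
    Tendsto (mWrightSeries β) (𝓝 0) (𝓝 (Gamma (1 - β))⁻¹) := by
  set a : ℕ → ℝ := fun n => ((n ! : ℝ) * Gamma (1 - β - β * n))⁻¹
  have ha0 : a 0 = (Gamma (1 - β))⁻¹ := by simp [a]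
  have hM : ∀ x, mWrightSeries β x = ∑' n, a n * (-x) ^ n := fun x => by
    simp only [mWrightSeries, a, div_eq_inv_mul]
  rw [tendsto_iff_norm_sub_tendsto_zero, ← ha0]
  refine squeeze_zero' (g := fun x => 2 * max (Gamma β) 1 * |x|)
    (Eventually.of_forall fun _ => norm_nonneg _) ?_
    ((continuous_const.mul continuous_abs).tendsto' 0 0 (by simp))
  filter_upwards [Metric.ball_mem_nhds 0 (by norm_num : (0 : ℝ) < 1 / 2)] with x hx
  rw [mem_ball_zero_iff, Real.norm_eq_abs] at hx
  rw [hM, Real.norm_eq_abs, ← abs_neg x]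
  exact abs_tsum_mul_pow_sub_coeff_zero_le (abs_inv_factorial_mul_Gamma_le hβ0 hβ1)
    (by rw [abs_neg]; exact hx.le)

theorem withDensity_Iic_eq_setLIntegral_Ioc {f : ℝ → ℝ} (hf : ∀ x < 0, f x = 0) {y : ℝ}
    (hy : 0 ≤ y) :
    volume.withDensity (fun x => ENNReal.ofReal (f x)) (Iic y) =
      ∫⁻ x in Ioc 0 y, ENNReal.ofReal (f x) := by
  rw [withDensity_apply _ measurableSet_Iic, ← Iio_union_Icc_eq_Iic hy,
    lintegral_union measurableSet_Icc ((Iio_disjoint_Ici le_rfl).mono_right Icc_subset_Ici_self),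
    setLIntegral_congr Ioc_ae_eq_Icc.symm]
  rw [setLIntegral_congr_fun measurableSet_Iio (g := 0) fun x hx => by simp [hf x hx]]
  simp

theorem withDensity_Iic_le_mul {f : ℝ → ℝ} (hf : ∀ x < 0, f x = 0) {C : ℝ} (hC : ∀ x, f x ≤ C)
    {y : ℝ} (hy : 0 ≤ y) :
    volume.withDensity (fun x => ENNReal.ofReal (f x)) (Iic y) ≤ ENNReal.ofReal (C * y) := by
  calc _ = ∫⁻ x in Ioc 0 y, ENNReal.ofReal (f x) := withDensity_Iic_eq_setLIntegral_Ioc hf hy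
    _ ≤ ∫⁻ _ in Ioc 0 y, ENNReal.ofReal C :=
        setLIntegral_mono' measurableSet_Ioc fun x _ => ENNReal.ofReal_le_ofReal (hC x)
    _ = ENNReal.ofReal (C * y) := by
        rw [setLIntegral_const, Real.volume_Ioc, sub_zero, ENNReal.ofReal_mul' hy]

theorem abs_toReal_setLIntegral_Ioc_sub_le {f : ℝ → ℝ} {a b c δ : ℝ} (hab : a < b)
    (hc : 0 ≤ c) (hf : ∀ x ∈ Ioc a b, |f x - c| ≤ δ) :
    |(∫⁻ x in Ioc a b, ENNReal.ofReal (f x)).toReal - c * (b - a)| ≤ δ * (b - a) := by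
  have hba : 0 ≤ b - a := sub_nonneg.mpr hab.le
  have hδ : 0 ≤ δ := (abs_nonneg _).trans (hf b ⟨hab, le_rfl⟩)
  have hconst : ∀ d, ∫⁻ _ in Ioc a b, ENNReal.ofReal d = ENNReal.ofReal (d * (b - a)) := fun d => by
    rw [setLIntegral_const, Real.volume_Ioc, ENNReal.ofReal_mul' hba]
  have hup : ∫⁻ x in Ioc a b, ENNReal.ofReal (f x) ≤ ENNReal.ofReal ((c + δ) * (b - a)) := by
    rw [← hconst]
    exact setLIntegral_mono' measurableSet_Ioc fun x hx =>
      ENNReal.ofReal_le_ofReal (by linarith [(abs_le.mp (hf x hx)).2])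
  have hlow : ENNReal.ofReal ((c - δ) * (b - a)) ≤ ∫⁻ x in Ioc a b, ENNReal.ofReal (f x) := by
    rw [← hconst]
    exact setLIntegral_mono' measurableSet_Ioc fun x hx =>
      ENNReal.ofReal_le_ofReal (by linarith [(abs_le.mp (hf x hx)).1])
  have hfin : ∫⁻ x in Ioc a b, ENNReal.ofReal (f x) ≠ ⊤ := ne_top_of_le_ne_top ENNReal.ofReal_ne_top hup
  rw [abs_le]
  constructor
  · have := (ENNReal.ofReal_le_iff_le_toReal hfin).mp hlow
    linarith
  · have := ENNReal.toReal_le_of_le_ofReal (by positivity) hup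
    linarith

theorem tendsto_toReal_withDensity_Iic_div {f : ℝ → ℝ} (hf : ∀ x < 0, f x = 0) {c : ℝ}
    (hc : 0 ≤ c) (hlim : Tendsto f (𝓝[>] 0) (𝓝 c)) :
    Tendsto (fun y => (volume.withDensity (fun x => ENNReal.ofReal (f x)) (Iic y)).toReal / y)
      (𝓝[>] 0) (𝓝 c) := by
  rw [Metric.tendsto_nhds]
  intro δ hδ
  obtain ⟨r, hr, hfr⟩ := (nhdsGT_basis (0 : ℝ)).eventually_iff.mp
    (Metric.tendsto_nhds.mp hlim (δ / 2) (half_pos hδ))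
  filter_upwards [Ioo_mem_nhdsGT hr] with y hy
  have hbound := abs_toReal_setLIntegral_Ioc_sub_le hy.1 hc (f := f) (δ := δ / 2)
    fun x hx => (hfr ⟨hx.1, hx.2.trans_lt hy.2⟩).le
  rw [withDensity_Iic_eq_setLIntegral_Ioc hf hy.1.le, Real.dist_eq, div_sub' hy.1.ne', abs_div,
    abs_of_pos hy.1, div_lt_iff₀ hy.1]
  rw [sub_zero, mul_comm] at hbound
  linarith [mul_lt_mul_of_pos_right (half_lt_self hδ) hy.1]

theorem exists_exp_neg_mul_rpow_neg_le {C γ : ℝ} (hC : 0 < C) (hγ : 0 < γ) (p : ℝ) :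
    ∃ D, ∀ ε : ℝ, 0 < ε → ε ≤ 1 → exp (-C * ε ^ (-γ)) ≤ D * ε ^ p := by
  obtain ⟨m, hm⟩ := exists_nat_ge (p / γ)
  refine ⟨m ! / C ^ m, fun ε hε hε1 => ?_⟩
  have ht : 0 < C * ε ^ (-γ) := by positivity
  -- `exp t ≥ t ^ m / m!` at `t = C ε^(-γ)`, with `m ≥ p / γ`
  calc exp (-C * ε ^ (-γ)) ≤ ((C * ε ^ (-γ)) ^ m / m !)⁻¹ := by
        rw [neg_mul, exp_neg]
        exact inv_anti₀ (by positivity) (pow_div_factorial_le_exp _ ht.le m)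
    _ = m ! / C ^ m * ε ^ (γ * m) := by
        rw [mul_pow, ← rpow_natCast (ε ^ (-γ)), ← rpow_mul hε.le, neg_mul, rpow_neg hε.le]
        field_simp
    _ ≤ m ! / C ^ m * ε ^ p := mul_le_mul_of_nonneg_left
        (rpow_le_rpow_of_exponent_ge hε hε1 ((div_le_iff₀' hγ).mp hm)) (by positivity)

theorem ENNReal.le_ofReal_exp_of_log_toReal_le {a : ℝ≥0∞} (ha : a ≠ ⊤) {x : ℝ}
    (h : Real.log a.toReal ≤ x) : a ≤ ENNReal.ofReal (Real.exp x) := by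
  rw [← ENNReal.ofReal_toReal ha]
  refine ENNReal.ofReal_le_ofReal ?_
  rcases ENNReal.toReal_nonneg.eq_or_lt with h0 | hpos
  · rw [← h0]; positivity
  · exact (Real.log_le_iff_le_exp hpos).mp h

section SmallBall

variable {ρ : Measure ℝ} {D p : ℝ}

theorem ae_pos_of_measure_Iic_le_rpow (hp : 0 < p)
    (h : ∀ ε : ℝ, 0 < ε → ε ≤ 1 → ρ (Iic ε) ≤ ENNReal.ofReal (D * ε ^ p)) : ∀ᵐ s ∂ρ, 0 < s := by
  have hlim : Tendsto (fun ε : ℝ => ENNReal.ofReal (D * ε ^ p)) (𝓝[>] 0) (𝓝 0) := by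
    have : Tendsto (fun ε : ℝ => D * ε ^ p) (𝓝 0) (𝓝 (D * 0 ^ p)) :=
      ((continuous_id.rpow_const fun _ => Or.inr hp.le).const_mul D).tendsto 0
    rw [zero_rpow hp.ne', mul_zero] at this
    simpa using ENNReal.tendsto_ofReal (this.mono_left nhdsWithin_le_nhds)
  rw [ae_iff]
  simp only [not_lt]
  refine nonpos_iff_eq_zero.mp (ge_of_tendsto hlim ?_)
  filter_upwards [Ioc_mem_nhdsGT one_pos] with ε hε
  exact (measure_mono (Iic_subset_Iic.mpr hε.1.le)).trans (h ε hε.1 hε.2)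

theorem integrable_rpow_neg_of_measure_Iic_le [IsFiniteMeasure ρ] {q : ℝ} (hq : 0 < q)
    (hqp : q < p)
    (h : ∀ ε : ℝ, 0 < ε → ε ≤ 1 → ρ (Iic ε) ≤ ENNReal.ofReal (D * ε ^ p)) :
    Integrable (fun s => s ^ (-q)) ρ := by
  have hpos := ae_pos_of_measure_Iic_le_rpow (hq.trans hqp) h
  have hnn : 0 ≤ᵐ[ρ] fun s => s ^ (-q) := by
    filter_upwards [hpos] with s hs using (rpow_pos_of_pos hs _).le
  have hmeas : Measurable fun s : ℝ => s ^ (-q) := measurable_id.pow_const _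
  -- layer cake: `{s^(-q) ≥ t} = {s ≤ t^(-1/q)}` has mass `≤ D t^(-p/q)`, integrable at `∞` as `p > q`
  have hlevel : ∀ t ∈ Ioi (1 : ℝ),
      ρ {s | t ≤ s ^ (-q)} ≤ ENNReal.ofReal (D * t ^ ((-q)⁻¹ * p)) := fun t (ht : 1 < t) => by
    have ht0 : 0 < t := one_pos.trans ht
    calc ρ {s | t ≤ s ^ (-q)} ≤ ρ (Iic (t ^ (-q)⁻¹)) := by
          refine measure_mono_ae ?_
          filter_upwards [hpos] with s hs hts
          exact (le_rpow_inv_iff_of_neg hs ht0 (neg_lt_zero.mpr hq)).mpr hts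
      _ ≤ ENNReal.ofReal (D * (t ^ (-q)⁻¹) ^ p) :=
          h _ (rpow_pos_of_pos ht0 _) (rpow_le_one_of_one_le_of_nonpos ht.le (by
            simpa using hq.le))
      _ = ENNReal.ofReal (D * t ^ ((-q)⁻¹ * p)) := by rw [rpow_mul ht0.le]
  have hexp : (-q)⁻¹ * p < -1 := by
    rw [inv_neg, neg_mul, neg_lt_neg_iff, ← div_eq_inv_mul, one_lt_div hq]
    exact hqp
  have htail : ∫⁻ t in Ioi (1 : ℝ), ENNReal.ofReal (D * t ^ ((-q)⁻¹ * p)) < ⊤ :=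
    ((integrableOn_Ioi_rpow_of_lt hexp one_pos).const_mul D).lintegral_lt_top
  refine ⟨hmeas.aestronglyMeasurable, (hasFiniteIntegral_iff_ofReal hnn).mpr ?_⟩
  rw [lintegral_eq_lintegral_meas_le ρ hnn hmeas.aemeasurable, ← Ioc_union_Ioi_eq_Ioi zero_le_one,
    lintegral_union measurableSet_Ioi Ioc_disjoint_Ioi_same]
  refine ENNReal.add_lt_top.mpr ⟨?_, (setLIntegral_mono' measurableSet_Ioi hlevel).trans_lt htail⟩
  calc ∫⁻ t in Ioc 0 1, ρ {s | t ≤ s ^ (-q)} ≤ ∫⁻ _ in Ioc (0 : ℝ) 1, ρ univ :=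
        lintegral_mono fun _ => measure_mono (subset_univ _)
    _ < ⊤ := by simp [measure_lt_top]

end SmallBall

theorem ProbabilityTheory.IndepFun.measure_sqrt_mul_le {Ω : Type*} [MeasurableSpace Ω]
    {μ : Measure Ω} [IsFiniteMeasure μ] {S L : Ω → ℝ} (hind : IndepFun S L μ) (hSm : Measurable S)
    (hLm : Measurable L) (hS : ∀ᵐ s ∂μ.map S, 0 < s) {ε : ℝ} (hε : 0 ≤ ε) :
    μ {ω | √(L ω) * S ω ≤ ε} = ∫⁻ s, μ.map L (Iic ((ε / s) ^ 2)) ∂μ.map S := by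
  have hA : MeasurableSet {p : ℝ × ℝ | √p.2 * p.1 ≤ ε} :=
    measurableSet_le ((continuous_sqrt.measurable.comp measurable_snd).mul measurable_fst)
      measurable_const
  change μ ((fun ω => (S ω, L ω)) ⁻¹' {p : ℝ × ℝ | √p.2 * p.1 ≤ ε}) = _
  rw [← Measure.map_apply (hSm.prodMk hLm) hA,
    (indepFun_iff_map_prod_eq_prod_map_map hSm.aemeasurable hLm.aemeasurable).mp hind,
    Measure.prod_apply hA]
  refine lintegral_congr_ae ?_
  filter_upwards [hS] with s hs
  congr 1
  ext l
  simp only [mem_preimage, mem_ofPred_eq, mem_Iic, ← le_div_iff₀ hs, sqrt_le_iff]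
  exact and_iff_right (by positivity)

theorem tendsto_integral_comp_div_sq_div_sq {ρ : Measure ℝ} {F : ℝ → ℝ} {C c : ℝ}
    (hFm : Measurable F) (hF : ∀ y, 0 ≤ y → ‖F y‖ ≤ C * y)
    (hlim : Tendsto (fun y => F y / y) (𝓝[>] 0) (𝓝 c)) (hρ : ∀ᵐ s ∂ρ, 0 < s)
    (hint : Integrable (fun s => s ^ (-2 : ℝ)) ρ) :
    Tendsto (fun ε => (∫ s, F ((ε / s) ^ 2) ∂ρ) / ε ^ 2) (𝓝[>] 0)
      (𝓝 (c * ∫ s, s ^ (-2 : ℝ) ∂ρ)) := by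
  have hinv : ∀ s : ℝ, 0 < s → s ^ (-2 : ℝ) = (s ^ 2)⁻¹ := fun s hs => by
    rw [rpow_neg hs.le, rpow_two]
  simp_rw [← integral_div, ← integral_const_mul]
  refine tendsto_integral_filter_of_dominated_convergence (fun s => C * s ^ (-2 : ℝ))
    (Eventually.of_forall fun ε => ((hFm.comp ((measurable_const.div measurable_id).pow_const 2)).div_const
      _).aestronglyMeasurable) ?_ (hint.const_mul C) ?_
  · filter_upwards [self_mem_nhdsWithin] with ε (hε : 0 < ε)
    filter_upwards [hρ] with s hs
    rw [norm_div, norm_pow, Real.norm_of_nonneg hε.le, div_le_iff₀ (by positivity),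
      hinv s hs]
    refine (hF _ (by positivity)).trans_eq ?_
    field_simp
  · filter_upwards [hρ] with s hs
    have hy : Tendsto (fun ε : ℝ => (ε / s) ^ 2) (𝓝[>] 0) (𝓝[>] 0) := by
      refine tendsto_nhdsWithin_of_tendsto_nhds_of_eventually_within _ ?_ ?_
      · exact ((continuous_id.div_const s).pow 2).tendsto' 0 0 (by simp) |>.mono_left
          nhdsWithin_le_nhds
      · filter_upwards [self_mem_nhdsWithin] with ε (hε : 0 < ε)
        exact mem_Ioi.mpr (by positivity)
    refine ((hlim.comp hy).mul_const (s ^ (-2 : ℝ))).congr' ?_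
    filter_upwards [self_mem_nhdsWithin] with ε (hε : 0 < ε)
    rw [Function.comp_apply, hinv s hs]
    field_simp

theorem ggBm_small_ball_general {Ω : Type*} [MeasurableSpace Ω]
    (μ : Measure Ω) [IsProbabilityMeasure μ]
    (α β : ℝ) (hα0 : 0 < α) (hβ0 : 0 < β) (hβ1 : β < 1)
    -- fractional Brownian motion with Hurst parameter H = α/2, and its sup norm S
    (S : Ω → ℝ)
    (hSm : Measurable S)
    -- exponential small-ball bounds for the sup norm of fBm
    (C₁ C₂ : ℝ) (hC₂ : 0 < C₂)
    (hsb : ∀ ε : ℝ, 0 < ε → ε ≤ 1 →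
      -C₁ * ε ^ (-(1 / (α / 2))) ≤ Real.log (μ {ω | S ω ≤ ε}).toReal ∧
      Real.log (μ {ω | S ω ≤ ε}).toReal ≤ -C₂ * ε ^ (-(1 / (α / 2))))
    -- the independent factor L_β with the M-Wright density M_β
    (L : Ω → ℝ) (hLm : Measurable L)
    (hindep : IndepFun S L μ)
    (Mβ : ℝ → ℝ)
    (hMβ : ∀ x : ℝ, 0 ≤ x →
      Mβ x = ∑' n : ℕ, (-x) ^ n / ((n.factorial : ℝ) * Real.Gamma (1 - β - β * n)))
    (hM0 : ∀ x < (0 : ℝ), Mβ x = 0)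
    (hMbd : ∃ C, ∀ x, Mβ x ≤ C)
    (hMd : μ.map L = volume.withDensity (fun x => ENNReal.ofReal (Mβ x))) :
    Tendsto
      (fun ε : ℝ => (μ {ω | Real.sqrt (L ω) * S ω ≤ ε}).toReal / ε ^ 2)
      (nhdsWithin 0 (Set.Ioi 0))
      (nhds ((∫ ω, (S ω) ^ (-2 : ℝ) ∂μ) / Real.Gamma (1 - β))) := by
  obtain ⟨C, hC⟩ := hMbd
  obtain ⟨D, hD⟩ := exists_exp_neg_mul_rpow_neg_le hC₂ (by positivity : 0 < 1 / (α / 2)) 3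
  have hsmall : ∀ ε : ℝ, 0 < ε → ε ≤ 1 → μ.map S (Iic ε) ≤ ENNReal.ofReal (D * ε ^ (3 : ℝ)) :=
    fun ε hε hε1 => by
      rw [Measure.map_apply hSm measurableSet_Iic]
      exact (ENNReal.le_ofReal_exp_of_log_toReal_le (measure_ne_top _ _) (hsb ε hε hε1).2).trans
        (ENNReal.ofReal_le_ofReal (hD ε hε hε1))
  have hSpos := ae_pos_of_measure_Iic_le_rpow three_pos hsmall
  have hint := integrable_rpow_neg_of_measure_Iic_le two_pos (by norm_num) hsmall
  have hGm : Measurable fun y => μ.map L (Iic y) :=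
    Monotone.measurable fun _ _ h => measure_mono (Iic_subset_Iic.mpr h)
  have hF : ∀ y, 0 ≤ y → ‖(μ.map L (Iic y)).toReal‖ ≤ max C 0 * y := fun y hy => by
    rw [Real.norm_of_nonneg ENNReal.toReal_nonneg, hMd]
    exact ENNReal.toReal_le_of_le_ofReal (by positivity)
      (withDensity_Iic_le_mul hM0 (fun x => (hC x).trans (le_max_left C 0)) hy)
  have hdens : Tendsto Mβ (𝓝[>] 0) (𝓝 (Gamma (1 - β))⁻¹) := by
    refine ((tendsto_mWrightSeries_nhds_zero hβ0 hβ1.le).mono_left nhdsWithin_le_nhds).congr' ?_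
    filter_upwards [self_mem_nhdsWithin] with x (hx : 0 < x) using (hMβ x hx.le).symm
  have hFlim := tendsto_toReal_withDensity_Iic_div hM0
    (inv_nonneg.mpr (Gamma_pos_of_pos (sub_pos.mpr hβ1)).le) hdens
  rw [← hMd] at hFlim
  have key := tendsto_integral_comp_div_sq_div_sq hGm.ennreal_toReal hF hFlim hSpos hint
  rw [integral_map hSm.aemeasurable (measurable_id'.pow_const _).aestronglyMeasurable,
    inv_mul_eq_div] at key
  refine key.congr' ?_
  filter_upwards [self_mem_nhdsWithin] with ε (hε : 0 < ε)
  rw [hindep.measure_sqrt_mul_le hSm hLm hSpos hε.le]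
  exact congrArg (· / ε ^ 2) (integral_toReal
    (hGm.comp ((measurable_const.div measurable_id).pow_const 2)).aemeasurable
    (Eventually.of_forall fun _ => measure_lt_top _ _))

/-- Small ball asymptotics for generalized grey Brownian motion
`B_{α,β} = √(L_β) · B_{α/2}`: if the sup norm of the fBm part satisfies exponential
small-ball bounds, and `L_β` has the (bounded) M-Wright density `M_β`, then
`P[sup_{0≤t≤1}|B_{α,β}(t)| ≤ ε] ~ ε² E[(sup_{0≤t≤1}|B_{α/2}(t)|)^{-2}] / Γ(1-β)`
as `ε ↓ 0`. -/
theorem ggBm_small_ball {Ω : Type*} [MeasurableSpace Ω]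
    (μ : Measure Ω) [IsProbabilityMeasure μ]
    (α β : ℝ) (hα0 : 0 < α) (hα2 : α < 2) (hβ0 : 0 < β) (hβ1 : β < 1)
    -- fractional Brownian motion with Hurst parameter H = α/2, and its sup norm S
    (B : Ω → ℝ → ℝ) (S : Ω → ℝ)
    (hS : ∀ ω, S ω = sSup ((fun t => |B ω t|) '' Set.Icc 0 1))
    (hSm : Measurable S) (hS0 : ∀ ω, 0 ≤ S ω)
    -- exponential small-ball bounds for the sup norm of fBm
    (C₁ C₂ : ℝ) (hC₁ : 0 < C₁) (hC₂ : 0 < C₂)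
    (hsb : ∀ ε : ℝ, 0 < ε → ε ≤ 1 →
      -C₁ * ε ^ (-(1 / (α / 2))) ≤ Real.log (μ {ω | S ω ≤ ε}).toReal ∧
      Real.log (μ {ω | S ω ≤ ε}).toReal ≤ -C₂ * ε ^ (-(1 / (α / 2))))
    -- the independent factor L_β with the M-Wright density M_β
    (L : Ω → ℝ) (hLm : Measurable L) (hL0 : ∀ᵐ ω ∂μ, 0 < L ω)
    (hindep : IndepFun S L μ)
    (Mβ : ℝ → ℝ)
    (hMβ : ∀ x : ℝ, 0 ≤ x →
      Mβ x = ∑' n : ℕ, (-x) ^ n / ((n.factorial : ℝ) * Real.Gamma (1 - β - β * n)))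
    (hM0 : ∀ x < (0 : ℝ), Mβ x = 0) (hMnn : ∀ x, 0 ≤ Mβ x)
    (hMbd : ∃ C, ∀ x, Mβ x ≤ C)
    (hMd : μ.map L = volume.withDensity (fun x => ENNReal.ofReal (Mβ x))) :
    Tendsto
      (fun ε : ℝ => (μ {ω | Real.sqrt (L ω) * S ω ≤ ε}).toReal / ε ^ 2)
      (nhdsWithin 0 (Set.Ioi 0))
      (nhds ((∫ ω, (S ω) ^ (-2 : ℝ) ∂μ) / Real.Gamma (1 - β))) :=
  ggBm_small_ball_general μ α β hα0 hβ0 hβ1 S hSm C₁ C₂ hC₂ hsb L hLm hindep Mβ hMβ hM0 hMbd hMd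
end

section
/- Let θ > 2/(1-β̂) with 0 < β̂ < 1, and suppose F: (0,∞) → [0,1] satisfies F(y) ≤ K·exp(-c·y^{-θ}) for y ∈ (0,1]. Then the function y ↦ F(y)·y^{-3}·E_{1-β̂,1-β̂}(y^{-2}) is integrable on (0,∞). -/
/-!
Write `u = 1 - β̂`, so that the integrand is `∑ₙ F(y) y^(-2n-3) / Γ(un+u)`. For `y > 1` the
n-th term is at most `y⁻³ / Γ(un+u)` because `F ≤ 1`. For `y ≤ 1` put `x = c y^(-θ)` and
`s = (2n+3)/θ`: then `y^(-2n-3) e^(-x) = c^(-s) x^s e^(-x) ≤ c^(-s) Γ(s+1)`. So every term is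
at most `Mₙ / Γ(un+u) · min 1 y⁻³` with `Mₙ = K c^(-s) Γ(s+1) + 1`. Log-convexity of `Γ` makes
the ratio of consecutive terms of `∑ Mₙ / Γ(un+u)` of order `n^(2/θ - u)`, which tends to `0`
because `2/θ < u`; so the series converges and the integrand is dominated by a multiple of the
integrable function `min 1 y⁻³`.
-/

open MeasureTheory Real Filter Set Topology

namespace Real

theorem rpow_mul_exp_neg_le_Gamma_add_one {x s : ℝ} (hx : 0 ≤ x) (hs : 0 ≤ s) :
    x ^ s * exp (-x) ≤ Gamma (s + 1) := by
  have hint : IntegrableOn (fun t => exp (-t) * t ^ s) (Ioi 0) := by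
    simpa using GammaIntegral_convergent (s := s + 1) (by linarith)
  calc x ^ s * exp (-x) = ∫ t in Ioi x, exp (-t) * x ^ s := by
        rw [integral_mul_const, integral_exp_neg_Ioi, mul_comm]
    _ ≤ ∫ t in Ioi x, exp (-t) * t ^ s :=
        setIntegral_mono_on ((integrableOn_exp_neg_Ioi x).mul_const _)
          (hint.mono_set (Ioi_subset_Ioi hx)) measurableSet_Ioi fun t ht =>
          mul_le_mul_of_nonneg_left (rpow_le_rpow hx (le_of_lt ht) hs) (exp_pos _).le
    _ ≤ ∫ t in Ioi 0, exp (-t) * t ^ s :=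
        setIntegral_mono_set hint
          ((ae_restrict_iff' measurableSet_Ioi).2 (ae_of_all _ fun t (ht : 0 < t) =>
            mul_nonneg (exp_pos _).le (rpow_nonneg ht.le _)))
          (Ioi_subset_Ioi hx).eventuallyLE
    _ = Gamma (s + 1) := by rw [Gamma_eq_integral (by linarith), add_sub_cancel_right]

-- Wendel's inequality.
theorem Gamma_add_le_rpow_mul_Gamma {x t : ℝ} (hx : 0 < x) (ht0 : 0 ≤ t) (ht1 : t ≤ 1) :
    Gamma (x + t) ≤ x ^ t * Gamma x := by
  have hconv := convexOn_log_Gamma.2 (mem_Ioi.2 hx) (mem_Ioi.2 (by linarith : 0 < x + 1))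
    (sub_nonneg.2 ht1) ht0 (by ring)
  simp only [smul_eq_mul, Function.comp_apply] at hconv
  rw [show (1 - t) * x + t * (x + 1) = x + t by ring, Gamma_add_one hx.ne',
    log_mul hx.ne' (Gamma_pos_of_pos hx).ne'] at hconv
  calc Gamma (x + t) = exp (log (Gamma (x + t))) :=
        (exp_log (Gamma_pos_of_pos (by linarith))).symm
    _ ≤ exp (log x * t + log (Gamma x)) := exp_le_exp.2 (by linarith)
    _ = x ^ t * Gamma x := by rw [exp_add, exp_log (Gamma_pos_of_pos hx), rpow_def_of_pos hx]

theorem mul_Gamma_le_rpow_mul_Gamma_add {x t : ℝ} (hx : 0 < x) (ht0 : 0 ≤ t) (ht1 : t ≤ 1) :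
    x * Gamma x ≤ (x + t) ^ (1 - t) * Gamma (x + t) := by
  have h := Gamma_add_le_rpow_mul_Gamma (x := x + t) (t := 1 - t) (by linarith) (by linarith)
    (by linarith)
  rwa [show x + t + (1 - t) = x + 1 by ring, Gamma_add_one hx.ne'] at h

end Real

theorem norm_pow_mul_Gamma_div_Gamma_succ_le {r a b u v : ℝ} (ha0 : 0 ≤ a) (ha1 : a ≤ 1)
    (hu0 : 0 ≤ u) (hu1 : u ≤ 1) (hb : 0 < b) (hv : 0 < v) (n : ℕ) :
    ‖r ^ (n + 1) * Gamma (a * ↑(n + 1) + b) / Gamma (u * ↑(n + 1) + v)‖ ≤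
      |r| * (a * n + b) ^ a * (u * n + v + u) ^ (1 - u) / (u * n + v) *
        ‖r ^ n * Gamma (a * n + b) / Gamma (u * n + v)‖ := by
  set x := a * n + b
  set y := u * n + v
  have hx : 0 < x := by positivity
  have hy : 0 < y := by positivity
  have hΓx := Gamma_pos_of_pos hx
  have hΓy := Gamma_pos_of_pos hy
  have hΓyu := Gamma_pos_of_pos (add_pos_of_pos_of_nonneg hy hu0)
  have hΓxa := Gamma_pos_of_pos (add_pos_of_pos_of_nonneg hx ha0)
  rw [show a * ↑(n + 1) + b = x + a by push_cast; ring,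
    show u * ↑(n + 1) + v = y + u by push_cast; ring, norm_div, norm_div, norm_mul, norm_mul,
    norm_pow, norm_pow, pow_succ, Real.norm_of_nonneg hΓx.le, Real.norm_of_nonneg hΓy.le,
    Real.norm_of_nonneg hΓyu.le, Real.norm_of_nonneg hΓxa.le, Real.norm_eq_abs,
    div_le_iff₀ hΓyu]
  calc |r| ^ n * |r| * Gamma (x + a)
      ≤ |r| ^ n * |r| * (x ^ a * Gamma x) :=
        mul_le_mul_of_nonneg_left (Gamma_add_le_rpow_mul_Gamma hx ha0 ha1) (by positivity)
    _ = |r| * x ^ a * (y + u) ^ (1 - u) / y * (|r| ^ n * Gamma x / Gamma y) *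
          (y * Gamma y / (y + u) ^ (1 - u)) := by
        field_simp
    _ ≤ |r| * x ^ a * (y + u) ^ (1 - u) / y * (|r| ^ n * Gamma x / Gamma y) * Gamma (y + u) := by
        gcongr
        rw [div_le_iff₀ (by positivity), mul_comm (Gamma _)]
        exact mul_Gamma_le_rpow_mul_Gamma_add hy hu0 hu1

theorem eventually_ratio_bound_le_half {r a b u v : ℝ} (ha0 : 0 ≤ a) (hau : a < u)
    (hu1 : u ≤ 1) (hb : 0 < b) (hv : 0 < v) :
    ∀ᶠ n : ℕ in atTop,
      |r| * (a * n + b) ^ a * (u * n + v + u) ^ (1 - u) / (u * n + v) ≤ 1 / 2 := by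
  have hu0 : 0 < u := ha0.trans_lt hau
  set C := |r| * (1 + b) ^ a * (1 + v + u) ^ (1 - u) / u
  have hbound : ∀ t : ℝ, 1 ≤ t →
      |r| * (a * t + b) ^ a * (u * t + v + u) ^ (1 - u) / (u * t + v) ≤ C * t ^ (a - u) := by
    intro t ht
    have ht0 : 0 < t := by linarith
    calc |r| * (a * t + b) ^ a * (u * t + v + u) ^ (1 - u) / (u * t + v)
        ≤ |r| * ((1 + b) * t) ^ a * ((1 + v + u) * t) ^ (1 - u) / (u * t) := by
          gcongr
          · nlinarith
          · nlinarith
          · linarith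
      _ = C * t ^ (a - u) := by
          rw [mul_rpow (by positivity) ht0.le, mul_rpow (by positivity) ht0.le,
            show a - u = a + (1 - u) - 1 by ring, rpow_sub_one ht0.ne', rpow_add ht0]
          simp only [C]
          field_simp
  have hlim : Tendsto (fun n : ℕ => C * (n : ℝ) ^ (a - u)) atTop (𝓝 0) := by
    simpa using
      ((tendsto_rpow_neg_atTop (sub_pos.2 hau)).comp tendsto_natCast_atTop_atTop).const_mul C
  filter_upwards [hlim.eventually (ge_mem_nhds (by norm_num : (0 : ℝ) < 1 / 2)),
    eventually_ge_atTop 1] with n hn hn1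
  exact (hbound n (by exact_mod_cast hn1)).trans hn

theorem summable_pow_mul_Gamma_div_Gamma {r a b u v : ℝ} (ha0 : 0 ≤ a) (hau : a < u)
    (hu1 : u ≤ 1) (hb : 0 < b) (hv : 0 < v) :
    Summable fun n : ℕ => r ^ n * Gamma (a * n + b) / Gamma (u * n + v) :=
  summable_of_ratio_norm_eventually_le (by norm_num : (1 / 2 : ℝ) < 1)
    ((eventually_ratio_bound_le_half ha0 hau hu1 hb hv).mono fun n hn =>
      (norm_pow_mul_Gamma_div_Gamma_succ_le ha0 (hau.le.trans hu1) (ha0.trans hau.le) hu1 hb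
        hv n).trans (mul_le_mul_of_nonneg_right hn (norm_nonneg _)))

noncomputable def mittagLeffler (u v x : ℝ) : ℝ := ∑' n : ℕ, x ^ n / Gamma (u * n + v)

section MittagLeffler

variable {u v : ℝ}

theorem summable_mittagLeffler (hu0 : 0 < u) (hu1 : u ≤ 1) (hv : 0 < v) (x : ℝ) :
    Summable fun n : ℕ => x ^ n / Gamma (u * n + v) := by
  simpa using summable_pow_mul_Gamma_div_Gamma (r := x) le_rfl hu0 hu1 one_pos hv

theorem measurable_mittagLeffler (hu0 : 0 < u) (hu1 : u ≤ 1) (hv : 0 < v) :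
    Measurable (mittagLeffler u v) :=
  measurable_of_tendsto_metrizable
    (f := fun N x => ∑ n ∈ Finset.range N, x ^ n / Gamma (u * n + v)) (fun N => by fun_prop)
    (tendsto_pi_nhds.2 fun x => (summable_mittagLeffler hu0 hu1 hv x).hasSum.tendsto_sum_nat)

theorem mittagLeffler_nonneg (hu0 : 0 ≤ u) (hv : 0 < v) {x : ℝ} (hx : 0 ≤ x) :
    0 ≤ mittagLeffler u v x :=
  tsum_nonneg fun n => div_nonneg (pow_nonneg hx n) (Gamma_pos_of_pos (by positivity)).le

theorem mul_mittagLeffler_le_of_le (hu0 : 0 < u) (hu1 : u ≤ 1) (hv : 0 < v) {x C B : ℝ}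
    {w : ℕ → ℝ} (hw : Summable fun n : ℕ => w n / Gamma (u * n + v))
    (h : ∀ n : ℕ, C * x ^ n ≤ w n * B) :
    C * mittagLeffler u v x ≤ (∑' n : ℕ, w n / Gamma (u * n + v)) * B := by
  rw [mittagLeffler, ← tsum_mul_left, ← tsum_mul_right]
  refine ((summable_mittagLeffler hu0 hu1 hv x).mul_left C).tsum_le_tsum (fun n => ?_)
    (hw.mul_right B)
  rw [mul_div_assoc', div_mul_eq_mul_div]
  exact div_le_div_of_nonneg_right (h n) (Gamma_pos_of_pos (by positivity)).le

end MittagLeffler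

theorem integrableOn_min_one_rpow_Ioi {p : ℝ} (hp : p < -1) :
    IntegrableOn (fun y : ℝ => min 1 (y ^ p)) (Ioi 0) := by
  have hmeas : Measurable fun y : ℝ => min 1 (y ^ p) := by fun_prop
  rw [← Ioc_union_Ioi_eq_Ioi zero_le_one]
  refine IntegrableOn.union ?_ ?_
  · refine (integrableOn_const (C := (1 : ℝ)) (by simp)).mono' hmeas.aestronglyMeasurable
      ((ae_restrict_iff' measurableSet_Ioc).2 (ae_of_all _ fun y hy => ?_))
    rw [Real.norm_of_nonneg (le_min zero_le_one (rpow_nonneg hy.1.le _))]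
    exact min_le_left _ _
  · refine (integrableOn_Ioi_rpow_of_lt hp one_pos).mono' hmeas.aestronglyMeasurable
      ((ae_restrict_iff' measurableSet_Ioi).2 (ae_of_all _ fun y (hy : 1 < y) => ?_))
    rw [Real.norm_of_nonneg (le_min zero_le_one (rpow_nonneg (zero_le_one.trans hy.le) _))]
    exact min_le_right _ _

theorem exp_neg_mul_rpow_neg_mul_rpow_neg_le {c θ s y : ℝ} (hc : 0 < c) (hy : 0 < y)
    (hs : 0 ≤ s) : exp (-c * y ^ (-θ)) * y ^ (-(θ * s)) ≤ c ^ (-s) * Gamma (s + 1) := by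
  have hx : 0 ≤ c * y ^ (-θ) := by positivity
  have hpow : y ^ (-(θ * s)) = c ^ (-s) * (c * y ^ (-θ)) ^ s := by
    rw [mul_rpow hc.le (rpow_nonneg hy.le _), ← rpow_mul hy.le, ← mul_assoc, ← rpow_add hc,
      neg_add_cancel, rpow_zero, one_mul, neg_mul]
  calc exp (-c * y ^ (-θ)) * y ^ (-(θ * s))
      = c ^ (-s) * ((c * y ^ (-θ)) ^ s * exp (-(c * y ^ (-θ)))) := by rw [hpow, neg_mul]; ring
    _ ≤ c ^ (-s) * Gamma (s + 1) :=
        mul_le_mul_of_nonneg_left (rpow_mul_exp_neg_le_Gamma_add_one hx hs) (by positivity)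

theorem mul_rpow_neg_three_mul_pow_le {z K c θ y : ℝ} (hK : 0 ≤ K) (hc : 0 < c) (hθ : 0 < θ)
    (hy : 0 < y) (hz1 : z ≤ 1) (hz : y ≤ 1 → z ≤ K * exp (-c * y ^ (-θ))) (n : ℕ) :
    z * y ^ (-3 : ℝ) * (y ^ (-2 : ℝ)) ^ n ≤
      (K * c ^ (-((2 * n + 3) / θ)) * Gamma ((2 * n + 3) / θ + 1) + 1) *
        min 1 (y ^ (-3 : ℝ)) := by
  set s : ℝ := (2 * n + 3) / θ
  have hs : 0 ≤ s := by positivity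
  have hA : 0 ≤ K * c ^ (-s) * Gamma (s + 1) := by
    have := Gamma_pos_of_pos (by positivity : 0 < s + 1)
    positivity
  have hpow : y ^ (-3 : ℝ) * (y ^ (-2 : ℝ)) ^ n = y ^ (-(θ * s)) := by
    rw [← rpow_natCast, ← rpow_mul hy.le, ← rpow_add hy, mul_div_cancel₀ _ hθ.ne']
    ring_nf
  rw [mul_assoc, hpow]
  rcases le_or_gt y 1 with hy1 | hy1
  · rw [min_eq_left (one_le_rpow_of_pos_of_le_one_of_nonpos hy hy1 (by norm_num)), mul_one]
    calc z * y ^ (-(θ * s)) ≤ K * exp (-c * y ^ (-θ)) * y ^ (-(θ * s)) :=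
          mul_le_mul_of_nonneg_right (hz hy1) (by positivity)
      _ ≤ K * (c ^ (-s) * Gamma (s + 1)) := by
          rw [mul_assoc]
          exact mul_le_mul_of_nonneg_left (exp_neg_mul_rpow_neg_mul_rpow_neg_le hc hy hs) hK
      _ ≤ K * c ^ (-s) * Gamma (s + 1) + 1 := by linarith
  · rw [min_eq_right (rpow_le_one_of_one_le_of_nonpos hy1.le (by norm_num))]
    calc z * y ^ (-(θ * s)) ≤ 1 * y ^ (-3 : ℝ) := by
          refine mul_le_mul hz1 (rpow_le_rpow_of_exponent_le hy1.le ?_) (by positivity) zero_le_one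
          simp only [s, mul_div_cancel₀ _ hθ.ne']
          linarith [(n.cast_nonneg : (0 : ℝ) ≤ n)]
      _ ≤ (K * c ^ (-s) * Gamma (s + 1) + 1) * y ^ (-3 : ℝ) := by
          gcongr
          linarith

/-- Integrability of the dominating function in the small-ball expansion: if
`θ > 2/(1-β̂)` and `F : (0,∞) → [0,1]` satisfies `F y ≤ K exp(-c y^{-θ})` on `(0,1]`,
then `y ↦ F(y) y^{-3} E_{1-β̂,1-β̂}(y^{-2})` is integrable on `(0,∞)`. -/
theorem dominating_function_integrable (βh θ K c : ℝ)
    (hβ0 : 0 < βh) (hβ1 : βh < 1) (hθ : 2 / (1 - βh) < θ) (hK : 0 < K) (hc : 0 < c)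
    (F : ℝ → ℝ) (hFm : Measurable F) (hF0 : ∀ y, 0 ≤ F y) (hF1 : ∀ y, F y ≤ 1)
    (hF : ∀ y : ℝ, 0 < y → y ≤ 1 → F y ≤ K * Real.exp (-c * y ^ (-θ))) :
    IntegrableOn
      (fun y : ℝ => F y * y ^ (-3 : ℝ) *
        ∑' n : ℕ, (y ^ (-2 : ℝ)) ^ n / Real.Gamma ((1 - βh) * n + (1 - βh)))
      (Set.Ioi 0) volume := by
  set u := 1 - βh
  have hu0 : 0 < u := sub_pos.2 hβ1
  have hu1 : u ≤ 1 := by linarith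
  have hθ0 : 0 < θ := (div_pos two_pos hu0).trans hθ
  have hau : 2 / θ < u := (div_lt_comm₀ hu0 hθ0).1 hθ
  set M : ℕ → ℝ := fun n => K * c ^ (-((2 * n + 3) / θ)) * Gamma ((2 * n + 3) / θ + 1) + 1
  have hM : Summable fun n : ℕ => M n / Gamma (u * n + u) := by
    refine (((summable_pow_mul_Gamma_div_Gamma (r := c ^ (-(2 / θ))) (b := 3 / θ + 1)
      (by positivity) hau hu1 (by positivity) hu0).mul_left (K * c ^ (-(3 / θ)))).add
      (summable_mittagLeffler hu0 hu1 hu0 1)).congr fun n => ?_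
    simp only [M]
    rw [show -((2 * n + 3) / θ) = -(3 / θ) + -(2 / θ) * n by ring, rpow_add hc,
      rpow_mul hc.le, rpow_natCast, show (2 * n + 3) / θ + 1 = 2 / θ * n + (3 / θ + 1) by ring,
      one_pow]
    ring
  change IntegrableOn (fun y => F y * y ^ (-3 : ℝ) * mittagLeffler u u (y ^ (-2 : ℝ))) (Ioi 0)
  refine ((integrableOn_min_one_rpow_Ioi (by norm_num : (-3 : ℝ) < -1)).const_mul
    (∑' n, M n / Gamma (u * n + u))).mono' ?_ ?_
  · exact ((hFm.mul (by fun_prop)).mul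
      ((measurable_mittagLeffler hu0 hu1 hu0).comp (by fun_prop))).aestronglyMeasurable
  · filter_upwards [ae_restrict_mem measurableSet_Ioi] with y (hy : 0 < y)
    rw [norm_of_nonneg (mul_nonneg (by have := hF0 y; positivity)
      (mittagLeffler_nonneg hu0.le hu0 (by positivity)))]
    exact mul_mittagLeffler_le_of_le hu0 hu1 hu0 hM fun n =>
      mul_rpow_neg_three_mul_pow_le hK.le hc hθ0 hy (hF1 y) (hF y hy) n
end

section
/- Let X, L be independent nonnegative random variables with tail functions satisfying P[X ≥ y] ≤ C·exp(-y²/3) for y ≥ 1 and the density M of L satisfying M(x) ≤ C·exp(-c·x^{1/(1-β)}) for x ≥ 1, with 0 < β < 1. Then there is K₂ > 0 such that P[√L·X ≥ y] ≤ exp(-K₂·y^{2/(2-β)}·(1+o(1))) as y → ∞. -/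
/-!
On `{L ≤ T}` we have `√L · X ≤ √T · X`, so `P[√L · X ≥ y] ≤ P[L > T] + P[X ≥ y / √T]`.
Since the density of `L` decays like `exp (-c x ^ (1 / (1 - β)))`, the first term is
`O(exp (-(c / 2) T ^ (1 / (1 - β))))`, and the second is `O(exp (-y² / (3 T)))`. With
`z = y ^ (2 / (2 - β))` the threshold `T = z ^ (1 - β)` turns both exponents into multiples of `z`,
which gives the bound with `g = 0`.
-/

open MeasureTheory ProbabilityTheory Real Filter

lemma rpow_add_le_two_mul_rpow {p T x : ℝ} (hp : 1 ≤ p) (hT : 0 ≤ T) (hx : 1 ≤ x) (hTx : T ≤ x) :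
    T ^ p + x ≤ 2 * x ^ p := by
  have hTp : T ^ p ≤ x ^ p := rpow_le_rpow hT hTx (by linarith)
  have hxp : x ≤ x ^ p := by simpa using rpow_le_rpow_of_exponent_le hx hp
  linarith

lemma integral_Ioi_exp_neg_mul_le {b : ℝ} (hb : 0 < b) {T : ℝ} (hT : 0 ≤ T) :
    ∫ x in Set.Ioi T, exp (-b * x) ≤ b⁻¹ := by
  rw [integral_exp_mul_Ioi (neg_neg_of_pos hb), div_neg, neg_div, neg_neg, div_eq_inv_mul]
  exact mul_le_of_le_one_right (inv_nonneg.2 hb.le) (exp_le_one_iff.2 (by nlinarith))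

lemma eventually_add_mul_exp_neg_le {A B a b : ℝ} (hA : 0 ≤ A) (hB : 0 ≤ B) (ha : 0 < a)
    (hb : 0 < b) :
    ∀ᶠ z in atTop, A * exp (-a * z) + B * exp (-b * z) ≤ exp (-(min a b / 2) * z) := by
  set m := min a b
  have hm : 0 < m / 2 := half_pos (lt_min ha hb)
  filter_upwards [eventually_ge_atTop 0, (tendsto_exp_atTop.comp
    (tendsto_id.const_mul_atTop hm)).eventually_ge_atTop (A + B)] with z hz hAB
  have hma : -a * z ≤ -m * z := by nlinarith [min_le_left a b]
  have hmb : -b * z ≤ -m * z := by nlinarith [min_le_right a b]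
  calc A * exp (-a * z) + B * exp (-b * z) ≤ (A + B) * exp (-m * z) := by
        rw [add_mul]; gcongr
    _ ≤ exp (m / 2 * z) * exp (-m * z) := by gcongr; exact hAB
    _ = exp (-(m / 2) * z) := by rw [← exp_add]; ring_nf

lemma div_sqrt_rpow_rpow_eq_sqrt_rpow {y β : ℝ} (hy : 0 < y) (hβ : β < 2) :
    y / √((y ^ (2 / (2 - β))) ^ (1 - β)) = √(y ^ (2 / (2 - β))) := by
  set z := y ^ (2 / (2 - β))
  have hz : 0 < z := rpow_pos_of_pos hy _
  have hzy : z * z ^ (1 - β) = y ^ 2 := by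
    have : 2 - β ≠ 0 := by linarith
    rw [mul_comm, ← rpow_add_one hz.ne', ← rpow_mul hy.le, ← rpow_two]
    congr 1
    field_simp
    ring
  rw [div_eq_iff (sqrt_pos.2 (rpow_pos_of_pos hz _)).ne', ← sqrt_mul hz.le, hzy, sqrt_sq hy.le]

section Tails

variable {Ω : Type*} [MeasurableSpace Ω] {μ : Measure Ω} {L : Ω → ℝ}

lemma measureReal_le_sqrt_mul_le_add [IsFiniteMeasure μ] {X : Ω → ℝ} (hX0 : ∀ ω, 0 ≤ X ω)
    {T : ℝ} (hT : 0 < T) (y : ℝ) :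
    μ.real {ω | y ≤ √(L ω) * X ω} ≤ μ.real {ω | T < L ω} + μ.real {ω | y / √T ≤ X ω} := by
  refine (measureReal_mono fun ω hω => ?_).trans (measureReal_union_le _ _)
  rcases lt_or_ge T (L ω) with hTL | hLT
  · exact Or.inl hTL
  · refine Or.inr ((div_le_iff₀' (sqrt_pos.2 hT)).2 (le_trans hω ?_))
    gcongr
    exact hX0 ω

lemma measureReal_lt_le_integral_of_density_le (hLm : Measurable L) {M : ℝ → ℝ}
    (hMd : μ.map L = volume.withDensity (fun x => ENNReal.ofReal (M x))) {f : ℝ → ℝ} {T : ℝ}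
    (hf : IntegrableOn f (Set.Ioi T)) (hf0 : ∀ x ∈ Set.Ioi T, 0 ≤ f x)
    (hMf : ∀ x ∈ Set.Ioi T, M x ≤ f x) :
    μ.real {ω | T < L ω} ≤ ∫ x in Set.Ioi T, f x := by
  have hmap : μ {ω | T < L ω} = ∫⁻ x in Set.Ioi T, ENNReal.ofReal (M x) := by
    change μ (L ⁻¹' Set.Ioi T) = _
    rw [← Measure.map_apply hLm measurableSet_Ioi, hMd, withDensity_apply _ measurableSet_Ioi]
  refine ENNReal.toReal_le_of_le_ofReal (setIntegral_nonneg measurableSet_Ioi hf0) ?_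
  rw [hmap, ofReal_integral_eq_lintegral_ofReal hf ((ae_restrict_iff' measurableSet_Ioi).2
    (.of_forall hf0))]
  exact setLIntegral_mono' measurableSet_Ioi fun x hx => ENNReal.ofReal_le_ofReal (hMf x hx)

/-- Half of the decay `exp (-c x ^ p)` is spent on the threshold `T`, the other half makes the
remaining tail integrable. -/
lemma measureReal_lt_le_of_density_le_exp_rpow {M : ℝ → ℝ} (hLm : Measurable L)
    (hMd : μ.map L = volume.withDensity (fun x => ENNReal.ofReal (M x))) {C c p : ℝ}
    (hC : 0 ≤ C) (hc : 0 < c) (hp : 1 ≤ p) (hM : ∀ x, 1 ≤ x → M x ≤ C * exp (-c * x ^ p))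
    {T : ℝ} (hT : 1 ≤ T) :
    μ.real {ω | T < L ω} ≤ 2 * C / c * exp (-(c / 2) * T ^ p) := by
  set D := C * exp (-(c / 2) * T ^ p) with hD
  have hc2 : 0 < c / 2 := half_pos hc
  calc μ.real {ω | T < L ω} ≤ ∫ x in Set.Ioi T, D * exp (-(c / 2) * x) := by
        refine measureReal_lt_le_integral_of_density_le hLm hMd
          ((exp_neg_integrableOn_Ioi T hc2).const_mul D) (fun x _ => by positivity) fun x hx => ?_
        have hx : T < x := hx
        have key := rpow_add_le_two_mul_rpow hp (by linarith) (by linarith) hx.le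
        calc M x ≤ C * exp (-c * x ^ p) := hM x (by linarith)
          _ ≤ D * exp (-(c / 2) * x) := by
            rw [hD, mul_assoc, ← exp_add]
            gcongr
            nlinarith
    _ = D * ∫ x in Set.Ioi T, exp (-(c / 2) * x) := integral_const_mul D _
    _ ≤ D * (c / 2)⁻¹ := by gcongr; exact integral_Ioi_exp_neg_mul_le hc2 (by linarith)
    _ = 2 * C / c * exp (-(c / 2) * T ^ p) := by rw [hD]; field_simp

end Tails

theorem ggBm_large_deviations_upper_general {Ω : Type*} [MeasurableSpace Ω]
    (μ : Measure Ω) [IsProbabilityMeasure μ]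
    (X L : Ω → ℝ) (hLm : Measurable L)
    (hX0 : ∀ ω, 0 ≤ X ω)
    (β : ℝ) (hβ0 : 0 < β) (hβ1 : β < 1)
    (C c : ℝ) (hC : 0 < C) (hc : 0 < c)
    (hXtail : ∀ y : ℝ, 1 ≤ y →
      (μ {ω | y ≤ X ω}).toReal ≤ C * Real.exp (-(y ^ 2) / 3))
    (M : ℝ → ℝ)
    (hMd : μ.map L = volume.withDensity (fun x => ENNReal.ofReal (M x)))
    (hMtail : ∀ x : ℝ, 1 ≤ x → M x ≤ C * Real.exp (-c * x ^ (1 / (1 - β)))) :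
    ∃ K₂ > (0 : ℝ), ∃ g : ℝ → ℝ, Tendsto g atTop (nhds 0) ∧
      ∀ᶠ y : ℝ in atTop,
        (μ {ω | y ≤ Real.sqrt (L ω) * X ω}).toReal ≤
          Real.exp (-K₂ * y ^ (2 / (2 - β)) * (1 + g y)) := by
  have h1β : 0 < 1 - β := by linarith
  have hp : 1 ≤ 1 / (1 - β) := by rw [le_div_iff₀ h1β]; linarith
  refine ⟨min (c / 2) (1 / 3) / 2, by positivity, fun _ => 0, tendsto_const_nhds, ?_⟩
  filter_upwards [eventually_ge_atTop 1,
    (tendsto_rpow_atTop (div_pos two_pos (by linarith : 0 < 2 - β))).eventually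
    (eventually_add_mul_exp_neg_le (by positivity : 0 ≤ 2 * C / c) hC.le (half_pos hc)
      (by norm_num : (0 : ℝ) < 1 / 3))] with y hy hexp
  set z := y ^ (2 / (2 - β))
  have hz : 1 ≤ z := one_le_rpow hy (div_pos two_pos (by linarith)).le
  have hT : 1 ≤ z ^ (1 - β) := one_le_rpow hz h1β.le
  have hsplit :=
    measureReal_le_sqrt_mul_le_add (μ := μ) (L := L) hX0 (by linarith : 0 < z ^ (1 - β)) y
  rw [div_sqrt_rpow_rpow_eq_sqrt_rpow (by linarith) (by linarith)] at hsplit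
  have hLtail := measureReal_lt_le_of_density_le_exp_rpow hLm hMd hC.le hc hp hMtail hT
  rw [one_div, rpow_rpow_inv (by linarith) h1β.ne'] at hLtail
  have hXz : μ.real {ω | √z ≤ X ω} ≤ C * exp (-(1 / 3) * z) := by
    have := hXtail √z (one_le_sqrt.2 hz)
    rwa [sq_sqrt (by linarith), neg_div, div_eq_inv_mul, ← neg_mul, ← one_div] at this
  calc μ.real {ω | y ≤ √(L ω) * X ω}
      ≤ μ.real {ω | z ^ (1 - β) < L ω} + μ.real {ω | √z ≤ X ω} := hsplit
    _ ≤ 2 * C / c * exp (-(c / 2) * z) + C * exp (-(1 / 3) * z) := add_le_add hLtail hXz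
    _ ≤ exp (-(min (c / 2) (1 / 3) / 2) * z) := hexp
    _ = exp (-(min (c / 2) (1 / 3) / 2) * z * (1 + 0)) := by rw [add_zero, mul_one]

/-- Large deviations upper bound for `√L · X`: if `P[X ≥ y] ≤ C exp(-y²/3)` for
`y ≥ 1` and the density `M` of `L` satisfies `M x ≤ C exp(-c x^{1/(1-β)})` for
`x ≥ 1`, then `P[√L · X ≥ y] ≤ exp(-K₂ y^{2/(2-β)} (1+o(1)))` as `y → ∞`. -/
theorem ggBm_large_deviations_upper {Ω : Type*} [MeasurableSpace Ω]
    (μ : Measure Ω) [IsProbabilityMeasure μ]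
    (X L : Ω → ℝ) (hXm : Measurable X) (hLm : Measurable L)
    (hX0 : ∀ ω, 0 ≤ X ω) (hL0 : ∀ᵐ ω ∂μ, 0 < L ω)
    (hindep : IndepFun X L μ)
    (β : ℝ) (hβ0 : 0 < β) (hβ1 : β < 1)
    (C c : ℝ) (hC : 0 < C) (hc : 0 < c)
    (hXtail : ∀ y : ℝ, 1 ≤ y →
      (μ {ω | y ≤ X ω}).toReal ≤ C * Real.exp (-(y ^ 2) / 3))
    (M : ℝ → ℝ) (hM0 : ∀ x ≤ (0 : ℝ), M x = 0) (hMnn : ∀ x, 0 ≤ M x)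
    (hMd : μ.map L = volume.withDensity (fun x => ENNReal.ofReal (M x)))
    (hMtail : ∀ x : ℝ, 1 ≤ x → M x ≤ C * Real.exp (-c * x ^ (1 / (1 - β)))) :
    ∃ K₂ > (0 : ℝ), ∃ g : ℝ → ℝ, Tendsto g atTop (nhds 0) ∧
      ∀ᶠ y : ℝ in atTop,
        (μ {ω | y ≤ Real.sqrt (L ω) * X ω}).toReal ≤
          Real.exp (-K₂ * y ^ (2 / (2 - β)) * (1 + g y)) :=
  ggBm_large_deviations_upper_general μ X L hLm hX0 β hβ0 hβ1 C c hC hc hXtail M hMd hMtail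
end

section
/- Let X, L be independent nonnegative random variables with P[X ≥ y] ≥ c·exp(-y²) for y ≥ 1 and density M of L satisfying M(x) ≥ c·exp(-C·x^{1/(1-β)}) on [1,∞), with 0 < β < 1. Then there is K₁ > 0 such that P[√L·X ≥ y] ≥ exp(-K₁·y^{2/(2-β)}·(1+o(1))) as y → ∞. -/
open MeasureTheory ProbabilityTheory Real Filter

/-- Large deviations lower bound for `√L · X`: if `P[X ≥ y] ≥ c exp(-y²)` for
`y ≥ 1` and the density `M` of `L` satisfies `M x ≥ c exp(-C x^{1/(1-β)})` on
`[1,∞)`, then `P[√L · X ≥ y] ≥ exp(-K₁ y^{2/(2-β)} (1+o(1)))` as `y → ∞`. -/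
theorem ggBm_large_deviations_lower {Ω : Type*} [MeasurableSpace Ω]
    (μ : Measure Ω) [IsProbabilityMeasure μ]
    (X L : Ω → ℝ) (hXm : Measurable X) (hLm : Measurable L)
    (hX0 : ∀ ω, 0 ≤ X ω) (hL0 : ∀ᵐ ω ∂μ, 0 < L ω)
    (hindep : IndepFun X L μ)
    (β : ℝ) (hβ0 : 0 < β) (hβ1 : β < 1)
    (C c : ℝ) (hC : 0 < C) (hc : 0 < c)
    (hXtail : ∀ y : ℝ, 1 ≤ y →
      c * Real.exp (-(y ^ 2)) ≤ (μ {ω | y ≤ X ω}).toReal)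
    (M : ℝ → ℝ) (hM0 : ∀ x ≤ (0 : ℝ), M x = 0) (hMnn : ∀ x, 0 ≤ M x)
    (hMd : μ.map L = volume.withDensity (fun x => ENNReal.ofReal (M x)))
    (hMtail : ∀ x : ℝ, 1 ≤ x → c * Real.exp (-C * x ^ (1 / (1 - β))) ≤ M x) :
    ∃ K₁ > (0 : ℝ), ∃ g : ℝ → ℝ, Tendsto g atTop (nhds 0) ∧
      ∀ᶠ y : ℝ in atTop,
        Real.exp (-K₁ * y ^ (2 / (2 - β)) * (1 + g y)) ≤
          (μ {ω | y ≤ Real.sqrt (L ω) * X ω}).toReal := by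
  have hβ2 : (0:ℝ) < 2 - β := by linarith
  have h1β : (0:ℝ) < 1 - β := by linarith
  set p : ℝ := 2 / (2 - β) with hp
  set q : ℝ := 2 * (1 - β) / (2 - β) with hq
  set r : ℝ := 1 / (1 - β) with hr
  have hp0 : 0 < p := by positivity
  have hq0 : 0 < q := by positivity
  have hr0 : 0 < r := by positivity
  refine ⟨1 + C * 2 ^ r, by positivity, fun _ => 0, tendsto_const_nhds, ?_⟩
  have hx0top : Tendsto (fun y : ℝ => c * c * y ^ q) atTop atTop :=
    (tendsto_rpow_atTop hq0).const_mul_atTop (by positivity)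
  filter_upwards [eventually_ge_atTop (1:ℝ), hx0top.eventually_ge_atTop 1]
    with y hy1 hycc
  have hy0 : (0:ℝ) < y := lt_of_lt_of_le one_pos hy1
  set x0 : ℝ := y ^ q with hx0
  set a : ℝ := y ^ (p / 2) with ha
  have hx01 : 1 ≤ x0 := Real.one_le_rpow hy1 hq0.le
  have ha1 : 1 ≤ a := Real.one_le_rpow hy1 (by positivity)
  have hx0pos : (0:ℝ) < x0 := lt_of_lt_of_le one_pos hx01
  have ha0 : (0:ℝ) ≤ a := by positivity
  -- key algebraic identities
  have hsq : Real.sqrt x0 * a = y := by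
    rw [hx0, Real.sqrt_eq_rpow, ← Real.rpow_mul hy0.le, ha,
      ← Real.rpow_add hy0]
    rw [show q * (1 / 2) + p / 2 = 1 by rw [hp, hq]; field_simp; ring,
      Real.rpow_one]
  have hasq : a ^ 2 = y ^ p := by
    rw [ha, ← Real.rpow_natCast (y ^ (p / 2)) 2, ← Real.rpow_mul hy0.le]
    norm_num
  have hx0r : (2 * x0) ^ r = 2 ^ r * y ^ p := by
    rw [hx0, Real.mul_rpow (by norm_num) (Real.rpow_nonneg hy0.le _),
      ← Real.rpow_mul hy0.le,
      show q * r = p by rw [hp, hq, hr]; field_simp]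
  -- inclusion of events
  have hsub : X ⁻¹' Set.Ici a ∩ L ⁻¹' Set.Icc x0 (2 * x0) ⊆
      {ω | y ≤ Real.sqrt (L ω) * X ω} := by
    rintro ω ⟨hA, hB⟩
    have h1 : Real.sqrt x0 ≤ Real.sqrt (L ω) := Real.sqrt_le_sqrt hB.1
    have h2 : Real.sqrt x0 * a ≤ Real.sqrt (L ω) * X ω :=
      mul_le_mul h1 hA ha0 (Real.sqrt_nonneg _)
    simpa [Set.mem_setOf_eq, hsq] using h2
  -- independence
  have hmul : μ (X ⁻¹' Set.Ici a ∩ L ⁻¹' Set.Icc x0 (2 * x0)) =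
      μ (X ⁻¹' Set.Ici a) * μ (L ⁻¹' Set.Icc x0 (2 * x0)) :=
    hindep.measure_inter_preimage_eq_mul _ _ measurableSet_Ici measurableSet_Icc
  -- lower bound for the X factor
  have hA : ENNReal.ofReal (c * Real.exp (-(y ^ p))) ≤ μ (X ⁻¹' Set.Ici a) := by
    refine ENNReal.ofReal_le_of_le_toReal ?_
    have h := hXtail a ha1
    rw [hasq] at h
    exact h
  -- lower bound for the L factor
  have hBmeas : μ (L ⁻¹' Set.Icc x0 (2 * x0)) =
      ∫⁻ x in Set.Icc x0 (2 * x0), ENNReal.ofReal (M x) := by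
    rw [← Measure.map_apply hLm measurableSet_Icc, hMd,
      withDensity_apply _ measurableSet_Icc]
  have hB : ENNReal.ofReal (c * Real.exp (-(C * 2 ^ r * y ^ p))) *
      ENNReal.ofReal x0 ≤ μ (L ⁻¹' Set.Icc x0 (2 * x0)) := by
    rw [hBmeas]
    have hpt : ∀ x ∈ Set.Icc x0 (2 * x0),
        ENNReal.ofReal (c * Real.exp (-(C * 2 ^ r * y ^ p))) ≤
          ENNReal.ofReal (M x) := by
      intro x hx
      apply ENNReal.ofReal_le_ofReal
      have hx1 : (1:ℝ) ≤ x := le_trans hx01 hx.1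
      have hx0le : (0:ℝ) ≤ x := by linarith
      refine le_trans ?_ (hMtail x hx1)
      have hle : x ^ r ≤ 2 ^ r * y ^ p := by
        rw [← hx0r]
        exact Real.rpow_le_rpow hx0le hx.2 hr0.le
      have : -(C * 2 ^ r * y ^ p) ≤ -C * x ^ r := by nlinarith
      exact mul_le_mul_of_nonneg_left (Real.exp_le_exp.mpr this) hc.le
    calc ENNReal.ofReal (c * Real.exp (-(C * 2 ^ r * y ^ p))) *
          ENNReal.ofReal x0
        = ∫⁻ _ in Set.Icc x0 (2 * x0),
            ENNReal.ofReal (c * Real.exp (-(C * 2 ^ r * y ^ p))) := by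
          rw [setLIntegral_const, Real.volume_Icc]
          congr 1
          congr 1
          ring
      _ ≤ ∫⁻ x in Set.Icc x0 (2 * x0), ENNReal.ofReal (M x) :=
          lintegral_mono_ae (ae_restrict_of_forall_mem measurableSet_Icc hpt)
  -- combine
  have hmain : ENNReal.ofReal
      (Real.exp (-(1 + C * 2 ^ r) * y ^ p)) ≤
      μ {ω | y ≤ Real.sqrt (L ω) * X ω} := by
    have hreal : Real.exp (-(1 + C * 2 ^ r) * y ^ p) ≤
        c * Real.exp (-(y ^ p)) *
          (c * Real.exp (-(C * 2 ^ r * y ^ p)) * x0) := by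
      have he : Real.exp (-(1 + C * 2 ^ r) * y ^ p) =
          Real.exp (-(y ^ p)) * Real.exp (-(C * 2 ^ r * y ^ p)) := by
        rw [← Real.exp_add]; ring_nf
      have hE : (0:ℝ) < Real.exp (-(y ^ p)) * Real.exp (-(C * 2 ^ r * y ^ p)) :=
        by positivity
      calc Real.exp (-(1 + C * 2 ^ r) * y ^ p)
          = 1 * (Real.exp (-(y ^ p)) * Real.exp (-(C * 2 ^ r * y ^ p))) := by
            rw [he, one_mul]
        _ ≤ (c * c * x0) *
            (Real.exp (-(y ^ p)) * Real.exp (-(C * 2 ^ r * y ^ p))) :=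
            mul_le_mul_of_nonneg_right hycc hE.le
        _ = c * Real.exp (-(y ^ p)) *
            (c * Real.exp (-(C * 2 ^ r * y ^ p)) * x0) := by ring
    calc ENNReal.ofReal (Real.exp (-(1 + C * 2 ^ r) * y ^ p))
        ≤ ENNReal.ofReal (c * Real.exp (-(y ^ p)) *
            (c * Real.exp (-(C * 2 ^ r * y ^ p)) * x0)) :=
          ENNReal.ofReal_le_ofReal hreal
      _ = ENNReal.ofReal (c * Real.exp (-(y ^ p))) *
            ENNReal.ofReal (c * Real.exp (-(C * 2 ^ r * y ^ p)) * x0) :=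
          ENNReal.ofReal_mul (by positivity)
      _ ≤ μ (X ⁻¹' Set.Ici a) * μ (L ⁻¹' Set.Icc x0 (2 * x0)) := by
          refine mul_le_mul' hA ?_
          rw [ENNReal.ofReal_mul (by positivity)]
          exact hB
      _ = μ (X ⁻¹' Set.Ici a ∩ L ⁻¹' Set.Icc x0 (2 * x0)) := hmul.symm
      _ ≤ μ {ω | y ≤ Real.sqrt (L ω) * X ω} := measure_mono hsub
  have := (ENNReal.ofReal_le_iff_le_toReal (measure_ne_top μ _)).mp hmain
  simpa using this
end

section
/- Let 0 < β < 1, θ > 0 with 2/θ + β < 1, let F: (0,∞) → [0,1] satisfy c₁exp(-C₁y^{-θ}) ≤ F(y) ≤ C exp(-C₂y^{-θ}) for y ∈ (0,1] and F(y) → 1 as y → ∞, and let M_β be the M-Wright density. Then for all ε ∈ [0,1], 2ε²∫₀^∞ F(y) M_β(ε²/y²) y^{-3} dy = 2 Σ_{n≥0} (-1)^n η_{2n+2} ε^{2n+2} / ((2n+2) n! Γ(1-β-βn)), where η_k = k∫₀^∞ y^{-k-1}F(y)dy, and the series converges absolutely. -/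
/-!
Expanding `M_β(ε²/y²) y⁻³ = ∑ₙ (-ε²)ⁿ y^(-2n-3) / (n! Γ(1-β-βn))` and integrating term by term
against `F` produces the moments `∫₀^∞ y^(-2n-3) F(y) dy = η_{2n+2} / (2n+2)`. The interchange is
justified by absolute summability. The reflection formula gives `|1/Γ(1-β-βn)| ≤ Γ(βn+β)/π`, and
`exp(-x) ≤ m!/xᵐ` applied to the small-ball bound `F(y) ≤ C exp(-C₂ y^(-θ))` bounds the `n`-th
moment by a constant times `Aⁿ Γ(2n/θ + 3/θ + 2)`. The resulting majorant
`Aⁿ Γ(2n/θ + 3/θ + 2) Γ(βn + β) / n!` is summable by the ratio test: log-convexity of `Γ` makes the ratio of consecutive terms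
`O(n^(2/θ+β-1))`, and `2/θ + β < 1`.
-/

open MeasureTheory Real Filter Set
open scoped Nat Topology

namespace Real

-- The slope of the convex `log ∘ Γ` on `[x, x + a]` is at most its slope `log (x + a)` on
-- `[x + a, x + a + 1]`.
theorem Gamma_add_le_Gamma_mul_rpow {x a : ℝ} (hx : 0 < x) (ha : 0 ≤ a) :
    Gamma (x + a) ≤ Gamma x * (x + a) ^ a := by
  rcases ha.eq_or_lt with rfl | ha
  · simp
  have hxa : 0 < x + a := by linarith
  have hslope := convexOn_log_Gamma.slope_mono_adjacent (mem_Ioi.2 hx)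
    (mem_Ioi.2 (by linarith : 0 < x + a + 1)) (by linarith : x < x + a) (lt_add_one _)
  simp only [Function.comp, Gamma_add_one hxa.ne', log_mul hxa.ne' (Gamma_pos_of_pos hxa).ne',
    add_sub_cancel_left, add_sub_cancel_right, div_one] at hslope
  rw [div_le_iff₀ ha] at hslope
  have hΓx := Gamma_pos_of_pos hx
  rw [← log_le_log_iff (Gamma_pos_of_pos hxa) (by positivity), log_mul hΓx.ne' (by positivity),
    log_rpow hxa]
  linarith

theorem Gamma_mul_succ_add_le {a b : ℝ} (ha : 0 ≤ a) (hb : 0 < b) (n : ℕ) :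
    Gamma (a * (n + 1 : ℕ) + b) ≤ Gamma (a * n + b) * ((a + b) * (n + 1)) ^ a := by
  have hx : 0 < a * n + b := by positivity
  calc Gamma (a * (n + 1 : ℕ) + b) = Gamma (a * n + b + a) := by push_cast; ring_nf
    _ ≤ Gamma (a * n + b) * (a * n + b + a) ^ a := Gamma_add_le_Gamma_mul_rpow hx ha
    _ ≤ Gamma (a * n + b) * ((a + b) * (n + 1)) ^ a := by
      gcongr
      nlinarith [(Nat.cast_nonneg n : (0:ℝ) ≤ n)]

theorem abs_inv_Gamma_one_sub_le {s : ℝ} (hs : 0 < s) :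
    |(Gamma (1 - s))⁻¹| ≤ Gamma s / π := by
  have hΓ := Gamma_pos_of_pos hs
  have hrefl : (Gamma (1 - s))⁻¹ = Gamma s * sin (π * s) / π := by
    have h := Gamma_mul_Gamma_one_sub s
    generalize sin (π * s) = t at h ⊢
    rcases eq_or_ne t 0 with rfl | ht
    · rw [div_zero, mul_eq_zero] at h
      simp [h.resolve_left hΓ.ne']
    · have hΓ1 : Gamma (1 - s) ≠ 0 := by
        rintro h1
        rw [h1, mul_zero] at h
        exact div_ne_zero pi_ne_zero ht h.symm
      rw [eq_div_iff ht] at h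
      rw [← h]
      field_simp
  rw [hrefl, abs_div, abs_mul, abs_of_pos hΓ, abs_of_pos pi_pos]
  gcongr
  exact mul_le_of_le_one_right hΓ.le (abs_sin_le_one _)

theorem one_le_Gamma {x : ℝ} (hx : 2 ≤ x) : 1 ≤ Gamma x :=
  Gamma_two ▸ Gamma_strictMonoOn_Ici.monotoneOn (mem_Ici.2 le_rfl) (mem_Ici.2 hx) hx

theorem factorial_ceil_le_Gamma {r : ℝ} (hr : 0 < r) : (⌈r⌉₊ ! : ℝ) ≤ Gamma (r + 2) := by
  have h1 : (1 : ℝ) ≤ ⌈r⌉₊ := by exact_mod_cast Nat.one_le_iff_ne_zero.2 (Nat.ceil_pos.2 hr).ne'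
  rw [← Gamma_nat_eq_factorial]
  exact Gamma_strictMonoOn_Ici.monotoneOn (mem_Ici.2 (by linarith)) (mem_Ici.2 (by linarith))
    (by linarith [Nat.ceil_lt_add_one hr.le])

theorem exp_neg_le_factorial_div_pow {x : ℝ} (hx : 0 < x) (m : ℕ) :
    exp (-x) ≤ m ! / x ^ m := by
  rw [exp_neg, inv_le_comm₀ (exp_pos x) (by positivity), inv_div]
  exact pow_div_factorial_le_exp x hx.le m

end Real

theorem summable_pow_mul_Gamma_mul_Gamma_div_factorial {A a a' b b' : ℝ} (hA : 0 ≤ A)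
    (ha : 0 ≤ a) (ha' : 0 ≤ a') (haa' : a + a' < 1) (hb : 0 < b) (hb' : 0 < b') :
    Summable fun n : ℕ => A ^ n * Gamma (a * n + b) * Gamma (a' * n + b') / n ! := by
  set f : ℕ → ℝ := fun n => A ^ n * Gamma (a * n + b) * Gamma (a' * n + b') / (n ! : ℝ)
  set r : ℕ → ℝ := fun n => A * (a + b) ^ a * (a' + b') ^ a' * ((n : ℝ) + 1) ^ (a + a' - 1)
  have hf0 (n : ℕ) : 0 ≤ f n := by
    have := Gamma_pos_of_pos (by positivity : 0 < a * n + b)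
    have := Gamma_pos_of_pos (by positivity : 0 < a' * n + b')
    positivity
  have hr : Tendsto r atTop (𝓝 0) := by
    have h := (tendsto_rpow_neg_atTop (by linarith : 0 < 1 - (a + a'))).comp
      (tendsto_atTop_add_const_right _ 1 tendsto_natCast_atTop_atTop)
    simpa [r, Function.comp_def] using h.const_mul (A * (a + b) ^ a * (a' + b') ^ a')
  have hstep (n : ℕ) : f (n + 1) ≤ r n * f n := by
    have hn : (0 : ℝ) < n + 1 := by positivity
    calc f (n + 1)
        ≤ A ^ (n + 1) * (Gamma (a * n + b) * ((a + b) * (n + 1)) ^ a) *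
            (Gamma (a' * n + b') * ((a' + b') * (n + 1)) ^ a') / (n + 1)! := by
          have := Gamma_pos_of_pos (by positivity : 0 < a * n + b)
          have := Gamma_pos_of_pos (by positivity : 0 < a' * (n + 1 : ℕ) + b')
          dsimp only [f]
          gcongr
          · exact Gamma_mul_succ_add_le ha hb n
          · exact Gamma_mul_succ_add_le ha' hb' n
      _ = r n * f n := by
          simp only [r, f, Nat.factorial_succ, Nat.cast_mul, Nat.cast_succ]
          rw [mul_rpow (by positivity) hn.le, mul_rpow (by positivity) hn.le,
            rpow_sub_one hn.ne', rpow_add hn]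
          field_simp
          ring
  refine summable_of_ratio_norm_eventually_le one_half_lt_one ?_
  filter_upwards [hr.eventually (ge_mem_nhds one_half_pos)] with n hn
  rw [norm_of_nonneg (hf0 _), norm_of_nonneg (hf0 _)]
  exact (hstep n).trans (mul_le_mul_of_nonneg_right hn (hf0 n))

theorem abs_pow_div_factorial_mul_Gamma_one_sub_le {β x : ℝ} (hβ : 0 < β) (hx : |x| ≤ 1)
    (n : ℕ) : |x ^ n / (n ! * Gamma (1 - β - β * n))| ≤ Gamma (β * n + β) / (π * n !) := by
  have hΓ := abs_inv_Gamma_one_sub_le (by positivity : 0 < β * n + β)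
  rw [show 1 - (β * n + β) = 1 - β - β * n by ring] at hΓ
  calc |x ^ n / (n ! * Gamma (1 - β - β * n))|
        = |x| ^ n * ((n ! : ℝ)⁻¹ * |(Gamma (1 - β - β * n))⁻¹|) := by
        rw [abs_div, abs_mul, abs_pow, Nat.abs_cast, abs_inv, div_eq_mul_inv, mul_inv]
    _ ≤ 1 * ((n ! : ℝ)⁻¹ * (Gamma (β * n + β) / π)) := by
        gcongr
        exact pow_le_one₀ (abs_nonneg x) hx
    _ = Gamma (β * n + β) / (π * n !) := by field_simp

theorem integral_tsum_mul_of_nonneg {α : Type*} [MeasurableSpace α] {μ : Measure α}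
    {c : ℕ → ℝ} {g : ℕ → α → ℝ} (hg : ∀ n, Integrable (g n) μ) (hg0 : ∀ n, 0 ≤ᵐ[μ] g n)
    (hs : Summable fun n => |c n| * ∫ x, g n x ∂μ) :
    ∫ x, ∑' n, c n * g n x ∂μ = ∑' n, c n * ∫ x, g n x ∂μ := by
  have hnorm (n : ℕ) : ∫ x, ‖c n * g n x‖ ∂μ = |c n| * ∫ x, g n x ∂μ := by
    rw [← integral_const_mul]
    refine integral_congr_ae ((hg0 n).mono fun x hx => ?_)
    simp [abs_of_nonneg hx]
  rw [← integral_tsum_of_summable_integral_norm (fun n => (hg n).const_mul (c n))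
    (by simpa only [hnorm] using hs)]
  simp_rw [integral_const_mul]

theorem div_sq_pow_mul_rpow_neg_three {y : ℝ} (hy : 0 < y) (x : ℝ) (n : ℕ) :
    (x / y ^ 2) ^ n * y ^ (-3 : ℝ) = x ^ n * y ^ (-((2 * n + 2 : ℕ) : ℝ) - 1) := by
  rw [show -((2 * n + 2 : ℕ) : ℝ) - 1 = -((2 * n : ℕ) : ℝ) + -3 by push_cast; ring,
    rpow_add hy, rpow_neg hy.le ((2 * n : ℕ) : ℝ), rpow_natCast, div_pow, ← pow_mul]
  ring

structure SmallBallUpperBound (θ C C₂ : ℝ) (F : ℝ → ℝ) : Prop where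
  measurable : Measurable F
  nonneg : ∀ y, 0 ≤ F y
  le_one : ∀ y, F y ≤ 1
  le_exp : ∀ y, 0 < y → y ≤ 1 → F y ≤ C * exp (-C₂ * y ^ (-θ))

namespace SmallBallUpperBound

variable {θ C C₂ : ℝ} {F : ℝ → ℝ}

theorem ae_rpow_mul_nonneg (hF : SmallBallUpperBound θ C C₂ F) (q : ℝ) :
    0 ≤ᵐ[volume.restrict (Ioi 0)] fun y => y ^ q * F y :=
  (ae_restrict_iff' measurableSet_Ioi).2
    (.of_forall fun y hy => mul_nonneg (rpow_nonneg (le_of_lt hy) q) (hF.nonneg y))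

theorem setIntegral_rpow_mul_nonneg (hF : SmallBallUpperBound θ C C₂ F) (q : ℝ) :
    0 ≤ ∫ y in Ioi 0, y ^ q * F y :=
  integral_nonneg_of_ae (hF.ae_rpow_mul_nonneg q)

theorem rpow_mul_le_factorial_div_pow (hF : SmallBallUpperBound θ C C₂ F) (hC : 0 ≤ C)
    (hC₂ : 0 < C₂) {p : ℝ} {m : ℕ} (hm : p + 1 ≤ θ * m) {y : ℝ} (hy0 : 0 < y) (hy1 : y ≤ 1) :
    y ^ (-p - 1) * F y ≤ C * (m ! / C₂ ^ m) := by
  have hpow : (C₂ * y ^ (-θ)) ^ m = C₂ ^ m * (y ^ (θ * m))⁻¹ := by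
    rw [mul_pow, ← rpow_natCast (y ^ (-θ)), ← rpow_mul hy0.le, neg_mul, rpow_neg hy0.le]
  calc y ^ (-p - 1) * F y
      ≤ y ^ (-p - 1) * (C * (m ! / (C₂ * y ^ (-θ)) ^ m)) := by
        gcongr
        refine (hF.le_exp y hy0 hy1).trans ?_
        gcongr
        rw [neg_mul]
        exact exp_neg_le_factorial_div_pow (by positivity) m
    _ = C * (m ! / C₂ ^ m) * y ^ (-p - 1 + θ * m) := by
        rw [hpow, rpow_add hy0]
        field_simp
    _ ≤ C * (m ! / C₂ ^ m) :=
        mul_le_of_le_one_right (by positivity) (rpow_le_one hy0.le hy1 (by linarith))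

theorem norm_rpow_mul_le_rpow (hF : SmallBallUpperBound θ C C₂ F) (q : ℝ) {y : ℝ} (hy : 0 < y) :
    ‖y ^ q * F y‖ ≤ y ^ q := by
  rw [norm_of_nonneg (mul_nonneg (rpow_nonneg hy.le q) (hF.nonneg y))]
  exact mul_le_of_le_one_right (rpow_nonneg hy.le q) (hF.le_one y)

theorem integrableOn_rpow_mul (hF : SmallBallUpperBound θ C C₂ F) (hθ : 0 < θ) (hC : 0 ≤ C)
    (hC₂ : 0 < C₂) {p : ℝ} (hp : 0 < p) :
    IntegrableOn (fun y => y ^ (-p - 1) * F y) (Ioi 0) := by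
  have hmeas : AEStronglyMeasurable (fun y => y ^ (-p - 1) * F y) :=
    ((measurable_id.pow_const _).mul hF.measurable).aestronglyMeasurable
  rw [← Ioc_union_Ioi_eq_Ioi zero_le_one]
  refine IntegrableOn.union ?_ ?_
  · set m := ⌈(p + 1) / θ⌉₊
    have hm : p + 1 ≤ θ * m := (div_le_iff₀' hθ).1 (Nat.le_ceil _)
    refine Measure.integrableOn_of_bounded (M := C * (m ! / C₂ ^ m)) (by simp) hmeas ?_
    refine (ae_restrict_iff' measurableSet_Ioc).2 (.of_forall fun y hy => ?_)
    rw [norm_of_nonneg (mul_nonneg (rpow_nonneg hy.1.le _) (hF.nonneg y))]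
    exact hF.rpow_mul_le_factorial_div_pow hC hC₂ hm hy.1 hy.2
  · refine (integrableOn_Ioi_rpow_of_lt (by linarith : -p - 1 < -1) one_pos).mono' hmeas.restrict ?_
    exact (ae_restrict_iff' measurableSet_Ioi).2
      (.of_forall fun y hy => hF.norm_rpow_mul_le_rpow _ (zero_lt_one.trans hy))

theorem setIntegral_rpow_mul_le (hF : SmallBallUpperBound θ C C₂ F) (hθ : 0 < θ) (hC : 0 ≤ C)
    (hC₂ : 0 < C₂) {p : ℝ} (hp : 0 < p) {m : ℕ} (hm : p + 1 ≤ θ * m) :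
    ∫ y in Ioi 0, y ^ (-p - 1) * F y ≤ C * (m ! / C₂ ^ m) + 1 / p := by
  have hint := hF.integrableOn_rpow_mul hθ hC hC₂ hp
  have hpow : IntegrableOn (fun y : ℝ => y ^ (-p - 1)) (Ioi 1) :=
    integrableOn_Ioi_rpow_of_lt (by linarith) one_pos
  rw [← Ioc_union_Ioi_eq_Ioi zero_le_one, setIntegral_union (Ioc_disjoint_Ioi le_rfl)
    measurableSet_Ioi (hint.mono_set Ioc_subset_Ioi_self)
    (hint.mono_set (Ioi_subset_Ioi zero_le_one))]
  gcongr ?_ + ?_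
  · calc ∫ y in Ioc 0 1, y ^ (-p - 1) * F y ≤ ∫ _ in Ioc (0 : ℝ) 1, C * (m ! / C₂ ^ m) :=
          setIntegral_mono_on (hint.mono_set Ioc_subset_Ioi_self) (integrableOn_const (by simp))
            measurableSet_Ioc
            fun y hy => hF.rpow_mul_le_factorial_div_pow hC hC₂ hm hy.1 hy.2
      _ = C * (m ! / C₂ ^ m) := by simp
  · calc ∫ y in Ioi 1, y ^ (-p - 1) * F y ≤ ∫ y in Ioi 1, y ^ (-p - 1) :=
          setIntegral_mono_on (hint.mono_set (Ioi_subset_Ioi zero_le_one)) hpow measurableSet_Ioi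
            fun y hy => (le_abs_self _).trans (hF.norm_rpow_mul_le_rpow _ (zero_lt_one.trans hy))
      _ = 1 / p := by
          rw [integral_Ioi_rpow_of_lt (by linarith) one_pos, one_rpow, sub_add_cancel, div_neg,
            neg_div, neg_neg]

theorem setIntegral_rpow_mul_le_Gamma (hF : SmallBallUpperBound θ C C₂ F) (hθ : 0 < θ)
    (hC : 0 ≤ C) (hC₂ : 0 < C₂) {p : ℝ} (hp : 1 ≤ p) :
    ∫ y in Ioi 0, y ^ (-p - 1) * F y ≤
      (C * max 1 C₂⁻¹ + 1) * max 1 C₂⁻¹ ^ ((p + 1) / θ) * Gamma ((p + 1) / θ + 2) := by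
  set r := (p + 1) / θ
  set M := max 1 C₂⁻¹
  set m := ⌈r⌉₊
  have hr : 0 < r := by positivity
  have hM : 1 ≤ M := le_max_left _ _
  have hm : p + 1 ≤ θ * m := (div_le_iff₀' hθ).1 (Nat.le_ceil r)
  have hΓ : 1 ≤ Gamma (r + 2) := one_le_Gamma (by linarith)
  have hMr : 1 ≤ M ^ r := one_le_rpow hM hr.le
  have hpow : 1 / C₂ ^ m ≤ M * M ^ r :=
    calc 1 / C₂ ^ m = C₂⁻¹ ^ (m : ℝ) := by rw [rpow_natCast, inv_pow, one_div]
      _ ≤ M ^ (m : ℝ) := by gcongr; exact le_max_right _ _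
      _ ≤ M ^ (r + 1) := rpow_le_rpow_of_exponent_le hM (Nat.ceil_lt_add_one hr.le).le
      _ = M * M ^ r := by rw [rpow_add_one (by positivity), mul_comm]
  calc ∫ y in Ioi 0, y ^ (-p - 1) * F y ≤ C * (m ! * (1 / C₂ ^ m)) + 1 / p := by
        rw [mul_one_div]; exact hF.setIntegral_rpow_mul_le hθ hC hC₂ (by linarith) hm
    _ ≤ C * (Gamma (r + 2) * (M * M ^ r)) + M ^ r * Gamma (r + 2) := by
        gcongr
        · exact factorial_ceil_le_Gamma hr
        · exact ((div_le_one (by linarith)).2 hp).trans (one_le_mul_of_one_le_of_one_le hMr hΓ)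
    _ = (C * M + 1) * M ^ r * Gamma (r + 2) := by ring

theorem summable_abs_mul_setIntegral (hF : SmallBallUpperBound θ C C₂ F) (hθ : 0 < θ)
    (hC : 0 ≤ C) (hC₂ : 0 < C₂) {β x : ℝ} (hβ : 0 < β) (hθβ : 2 / θ + β < 1) (hx : |x| ≤ 1) :
    Summable fun n : ℕ => |x ^ n / (n ! * Gamma (1 - β - β * n))| *
      ∫ y in Ioi 0, y ^ (-((2 * n + 2 : ℕ) : ℝ) - 1) * F y := by
  set M := max 1 C₂⁻¹
  have hM : 0 < M := lt_max_of_lt_left one_pos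
  have hmaj := summable_pow_mul_Gamma_mul_Gamma_div_factorial (A := M ^ (2 / θ))
    (by positivity) (by positivity) hβ.le hθβ (by positivity : 0 < 3 / θ + 2) hβ
  refine Summable.of_nonneg_of_le
    (fun n => mul_nonneg (abs_nonneg _) (hF.setIntegral_rpow_mul_nonneg _)) (fun n => ?_)
    (hmaj.mul_left ((C * M + 1) * M ^ (3 / θ) / π))
  have hJ := hF.setIntegral_rpow_mul_le_Gamma hθ hC hC₂ (p := ((2 * n + 2 : ℕ) : ℝ))
    (by push_cast; linarith [(Nat.cast_nonneg n : (0 : ℝ) ≤ n)])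
  rw [show (((2 * n + 2 : ℕ) : ℝ) + 1) / θ = 2 / θ * n + 3 / θ by push_cast; field_simp; ring]
    at hJ
  calc _ ≤ Gamma (β * n + β) / (π * n !) *
        ((C * M + 1) * M ^ (2 / θ * n + 3 / θ) * Gamma (2 / θ * n + 3 / θ + 2)) :=
        mul_le_mul (abs_pow_div_factorial_mul_Gamma_one_sub_le hβ hx n) hJ
          (hF.setIntegral_rpow_mul_nonneg _) (by positivity)
    _ = _ := by
        rw [rpow_add hM, rpow_mul hM.le, rpow_natCast, add_assoc]
        field_simp

end SmallBallUpperBound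

theorem smallBall_series_expansion_general (β θ C C₂ : ℝ)
    (hβ0 : 0 < β) (hθ : 0 < θ) (hθβ : 2 / θ + β < 1)
    (hC : 0 < C) (hC₂ : 0 < C₂)
    (F : ℝ → ℝ) (hFm : Measurable F) (hF0 : ∀ y, 0 ≤ F y) (hF1 : ∀ y, F y ≤ 1)
    (hFub : ∀ y : ℝ, 0 < y → y ≤ 1 → F y ≤ C * Real.exp (-C₂ * y ^ (-θ)))
    (Mβ : ℝ → ℝ)
    (hMβ : ∀ x : ℝ, 0 ≤ x →
      Mβ x = ∑' n : ℕ, (-x) ^ n / ((n.factorial : ℝ) * Real.Gamma (1 - β - β * n)))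
    (η : ℕ → ℝ)
    (hη : ∀ k : ℕ, η k = (k : ℝ) * ∫ y in Set.Ioi (0 : ℝ), y ^ (-(k : ℝ) - 1) * F y) :
    ∀ ε : ℝ, 0 ≤ ε → ε ≤ 1 →
      (2 * ε ^ 2 * ∫ y in Set.Ioi (0 : ℝ), F y * Mβ (ε ^ 2 / y ^ 2) * y ^ (-3 : ℝ)) =
        2 * ∑' n : ℕ, (-1 : ℝ) ^ n * η (2 * n + 2) * ε ^ (2 * n + 2) /
          (((2 * n + 2 : ℕ) : ℝ) * (n.factorial : ℝ) *
            Real.Gamma (1 - β - β * n)) ∧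
      Summable (fun n : ℕ =>
        |(-1 : ℝ) ^ n * η (2 * n + 2) * ε ^ (2 * n + 2) /
          (((2 * n + 2 : ℕ) : ℝ) * (n.factorial : ℝ) *
            Real.Gamma (1 - β - β * n))|) := by
  intro ε hε0 hε1
  have hF : SmallBallUpperBound θ C C₂ F := ⟨hFm, hF0, hF1, hFub⟩
  set c : ℕ → ℝ := fun n => (-ε ^ 2) ^ n / (n ! * Gamma (1 - β - β * n))
  set J : ℕ → ℝ := fun n => ∫ y in Ioi 0, y ^ (-((2 * n + 2 : ℕ) : ℝ) - 1) * F y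
  have hε : |-ε ^ 2| ≤ 1 := by rw [abs_neg, abs_of_nonneg (sq_nonneg ε)]; nlinarith
  have hsum : Summable fun n => |c n| * J n :=
    hF.summable_abs_mul_setIntegral hθ hC.le hC₂ hβ0 hθβ hε
  have hint : ∫ y in Ioi 0, F y * Mβ (ε ^ 2 / y ^ 2) * y ^ (-3 : ℝ) = ∑' n, c n * J n := by
    rw [← integral_tsum_mul_of_nonneg
      (fun n => hF.integrableOn_rpow_mul hθ hC.le hC₂ (by positivity))
      (fun n => hF.ae_rpow_mul_nonneg _) hsum]
    refine setIntegral_congr_fun measurableSet_Ioi fun y hy => ?_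
    rw [hMβ _ (by positivity), ← tsum_mul_left, ← tsum_mul_right]
    refine tsum_congr fun n => ?_
    rw [← neg_div]
    linear_combination (F y / (n ! * Gamma (1 - β - β * n))) *
      div_sq_pow_mul_rpow_neg_three hy (-ε ^ 2) n
  have hterm (n : ℕ) : ε ^ 2 * (c n * J n) = (-1 : ℝ) ^ n * η (2 * n + 2) * ε ^ (2 * n + 2) /
      (((2 * n + 2 : ℕ) : ℝ) * n ! * Gamma (1 - β - β * n)) := by
    simp only [c, J]
    rw [hη, neg_pow, ← pow_mul]
    field_simp
    ring
  refine ⟨by rw [hint, mul_assoc, ← tsum_mul_left]; exact congrArg (2 * ·) (tsum_congr hterm), ?_⟩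
  refine hsum.of_nonneg_of_le (fun n => abs_nonneg _) fun n => ?_
  rw [← hterm, abs_mul, abs_mul, abs_of_nonneg (hF.setIntegral_rpow_mul_nonneg _),
    abs_of_nonneg (sq_nonneg ε)]
  exact mul_le_of_le_one_left (mul_nonneg (abs_nonneg _) (hF.setIntegral_rpow_mul_nonneg _))
    (by nlinarith)

/-- Series expansion of the small-ball probability: under two-sided exponential
small-ball bounds on the cdf `F` with exponent `θ` satisfying `2/θ + β < 1`,
`2ε² ∫₀^∞ F(y) M_β(ε²/y²) y^{-3} dy
  = 2 ∑_{n≥0} (-1)^n η_{2n+2} ε^{2n+2} / ((2n+2) n! Γ(1-β-βn))`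
for all `ε ∈ [0,1]`, where `M_β` is the M-Wright function,
`η_k = k ∫₀^∞ y^{-k-1} F(y) dy`, and the series converges absolutely. -/
theorem smallBall_series_expansion (β θ c₁ C₁ C C₂ : ℝ)
    (hβ0 : 0 < β) (hβ1 : β < 1) (hθ : 0 < θ) (hθβ : 2 / θ + β < 1)
    (hc₁ : 0 < c₁) (hC₁ : 0 < C₁) (hC : 0 < C) (hC₂ : 0 < C₂)
    (F : ℝ → ℝ) (hFm : Measurable F) (hF0 : ∀ y, 0 ≤ F y) (hF1 : ∀ y, F y ≤ 1)
    (hFub : ∀ y : ℝ, 0 < y → y ≤ 1 → F y ≤ C * Real.exp (-C₂ * y ^ (-θ)))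
    (hFlb : ∀ y : ℝ, 0 < y → y ≤ 1 → c₁ * Real.exp (-C₁ * y ^ (-θ)) ≤ F y)
    (hFinf : Tendsto F atTop (nhds 1))
    (Mβ : ℝ → ℝ)
    (hMβ : ∀ x : ℝ, 0 ≤ x →
      Mβ x = ∑' n : ℕ, (-x) ^ n / ((n.factorial : ℝ) * Real.Gamma (1 - β - β * n)))
    (η : ℕ → ℝ)
    (hη : ∀ k : ℕ, η k = (k : ℝ) * ∫ y in Set.Ioi (0 : ℝ), y ^ (-(k : ℝ) - 1) * F y) :
    ∀ ε : ℝ, 0 ≤ ε → ε ≤ 1 →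
      (2 * ε ^ 2 * ∫ y in Set.Ioi (0 : ℝ), F y * Mβ (ε ^ 2 / y ^ 2) * y ^ (-3 : ℝ)) =
        2 * ∑' n : ℕ, (-1 : ℝ) ^ n * η (2 * n + 2) * ε ^ (2 * n + 2) /
          (((2 * n + 2 : ℕ) : ℝ) * (n.factorial : ℝ) *
            Real.Gamma (1 - β - β * n)) ∧
      Summable (fun n : ℕ =>
        |(-1 : ℝ) ^ n * η (2 * n + 2) * ε ^ (2 * n + 2) /
          (((2 * n + 2 : ℕ) : ℝ) * (n.factorial : ℝ) *
            Real.Gamma (1 - β - β * n))|) :=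
  smallBall_series_expansion_general β θ C C₂ hβ0 hθ hθβ hC hC₂ F hFm hF0 hF1 hFub Mβ hMβ η hη
end
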